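/- arXiv:2409.17551 — 8 statements merged into one kernel-verified Lean document; each statement's English description precedes it below -/
import Mathlib

section
/- Let A be a noetherian ring and let a be a proper ideal of A such that Ass(A/a) = Min(A/a) (a is unmixed). If a = Q_1 ∩ ⋯ ∩ Q_d is an irredundant primary decomposition of a, then for every integer s ≥ 1 one has a^{(s)} = Q_1^{(s)} ∩ ⋯ ∩ Q_d^{(s)}. -/
/-! The first uniqueness theorem for primary decomposition identifies the associated primes of
`A ⧸ a` with the radicals `Pᵢ` of the `Qᵢ`, and unmixedness makes every `Pᵢ` a minimal prime of
`a`. Hence `Qⱼ ⊄ Pᵢ` for `j ≠ i`, so `Qⱼ` extends to the unit ideal in `A_{Pᵢ}` and, localization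
commuting with finite intersections, `a A_{Pᵢ} = Qᵢ A_{Pᵢ}`. Taking `s`-th powers and contracting,
the `Pᵢ`-component of `a^{(s)}` is `Qᵢ^s A_{Pᵢ} ∩ A`, which is `Qᵢ^{(s)}` because `Pᵢ` is the only
associated prime of `A ⧸ Qᵢ`. -/

noncomputable section

/-- The `s`-th symbolic power of an ideal `a`: the intersection over all associated primes `P`
of `A ⧸ a` of the contraction of `a ^ s` extended to the localization at `P`. -/
def symbPow {A : Type*} [CommRing A] (a : Ideal A) (s : ℕ) : Ideal A :=
  sInf { J : Ideal A | ∃ (P : Ideal A) (hP : P ∈ associatedPrimes A (A ⧸ a)),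
      haveI : P.IsPrime := IsAssociatedPrime.isPrime hP
      J = (Ideal.map (algebraMap A (Localization.AtPrime P)) (a ^ s)).comap
            (algebraMap A (Localization.AtPrime P)) }

namespace Submodule

variable {R M : Type*} [CommRing R] [AddCommGroup M] [Module R M]

theorem associatedPrimes_quotient (N : Submodule R M) :
    associatedPrimes R (M ⧸ N) = N.associatedPrimes := by
  have hcolon (x : M) : (⊥ : Submodule R (M ⧸ N)).colon {N.mkQ x} = N.colon {x} := by
    ext r
    simp only [mem_colon_singleton, mem_bot, mkQ_apply, ← Quotient.mk_smul, Quotient.mk_eq_zero]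
  ext P
  constructor
  · rintro ⟨hP, x, rfl⟩
    obtain ⟨x, rfl⟩ := N.mkQ_surjective x
    exact ⟨hP, x, by rw [hcolon]⟩
  · rintro ⟨hP, x, rfl⟩
    exact ⟨hP, N.mkQ x, by rw [hcolon]⟩

end Submodule

namespace Ideal

variable {A : Type*} [CommRing A]

open scoped Function

theorem isMinimalPrimaryDecomposition_image {ι : Type*} [Fintype ι]
    {a : Ideal A} {Q : ι → Ideal A} (hprimary : ∀ i, (Q i).IsPrimary) (hdecomp : a = ⨅ i, Q i)
    (hirr₁ : ∀ i, a ≠ ⨅ j ∈ ({j | j ≠ i} : Set ι), Q j)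
    (hirr₂ : Pairwise ((· ≠ ·) on fun i ↦ (Q i).radical)) :
    Submodule.IsMinimalPrimaryDecomposition a (Finset.univ.image Q) where
  inf_eq := by rw [Finset.inf_image, Finset.inf_univ_eq_iInf, hdecomp]; rfl
  primary := by
    simp only [Finset.mem_image, Finset.mem_univ, true_and, forall_exists_index,
      forall_apply_eq_imp_iff]
    exact hprimary
  distinct := by
    simp only [Finset.coe_image, Finset.coe_univ, Set.image_univ]
    rintro _ ⟨i, rfl⟩ _ ⟨j, rfl⟩ hQ
    simp only [Function.onFun, Submodule.colon_univ]
    exact hirr₂ fun hij ↦ hQ (by rw [hij])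
  minimal := by
    simp only [Finset.mem_image, Finset.mem_univ, true_and, forall_exists_index,
      forall_apply_eq_imp_iff]
    intro i hle
    have hothers :
        ⨅ j ∈ ({j | j ≠ i} : Set ι), Q j ≤ ((Finset.univ.image Q).erase (Q i)).inf id := by
      refine Finset.le_inf fun J hJ ↦ ?_
      obtain ⟨hJi, j, -, rfl⟩ := by simpa only [Finset.mem_erase, Finset.mem_image] using hJ
      exact iInf₂_le j fun hji ↦ hJi (by rw [hji])
    refine hirr₁ i (le_antisymm (le_iInf₂ fun j _ ↦ hdecomp ▸ iInf_le Q j) ?_)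
    rw [hdecomp]
    refine le_iInf fun j ↦ ?_
    rcases eq_or_ne j i with rfl | hji
    · exact hothers.trans hle
    · exact iInf₂_le j hji

theorem associatedPrimes_quotient_eq_range_radical {ι : Type*} [Fintype ι]
    {a : Ideal A} {Q : ι → Ideal A} (hprimary : ∀ i, (Q i).IsPrimary) (hdecomp : a = ⨅ i, Q i)
    (hirr₁ : ∀ i, a ≠ ⨅ j ∈ ({j | j ≠ i} : Set ι), Q j)
    (hirr₂ : Pairwise ((· ≠ ·) on fun i ↦ (Q i).radical)) :
    associatedPrimes A (A ⧸ a) = Set.range fun i ↦ (Q i).radical := by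
  rw [Submodule.associatedPrimes_quotient, ← (isMinimalPrimaryDecomposition_image hprimary
    hdecomp hirr₁ hirr₂).image_radical_eq_associated_primes, Finset.coe_image, Finset.coe_univ,
    Set.image_univ, ← Set.range_comp]
  simp only [Function.comp_def, Submodule.colon_univ]

theorem not_le_of_mem_minimalPrimes_of_radical_ne {a J p : Ideal A} (hp : p ∈ a.minimalPrimes)
    (hJ : J.IsPrimary) (haJ : a ≤ J) (hne : J.radical ≠ p) : ¬ J ≤ p := by
  intro hJp
  have hle : J.radical ≤ p := hp.1.1.radical_le_iff.mpr hJp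
  exact hne (le_antisymm hle (hp.2 ⟨isPrime_radical hJ, haJ.trans le_radical⟩ hle))

theorem map_iInf_eq_map_of_not_le {ι : Type*} [Finite ι] {S : Type*} [CommRing S] [Algebra A S]
    (p : Ideal A) [p.IsPrime] [IsLocalization.AtPrime S p] (Q : ι → Ideal A) (i : ι)
    (hQ : ∀ j ≠ i, ¬ Q j ≤ p) :
    (⨅ j, Q j).map (algebraMap A S) = (Q i).map (algebraMap A S) := by
  have : Fintype ι := Fintype.ofFinite ι
  have hmap : (⨅ j, Q j).map (algebraMap A S) = ⨅ j, (Q j).map (algebraMap A S) := by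
    simpa only [Finset.inf_univ_eq_iInf, Function.comp_def, IsLocalization.mapFrameHom_apply] using
      map_finset_inf (IsLocalization.mapFrameHom p.primeCompl S) Finset.univ Q
  refine hmap.trans (le_antisymm (iInf_le _ i) (le_iInf fun j ↦ ?_))
  rcases eq_or_ne j i with rfl | hji
  · exact le_rfl
  · obtain ⟨x, hxQ, hxp⟩ := SetLike.not_le_iff_exists.mp (hQ j hji)
    have htop : (Q j).map (algebraMap A S) = ⊤ := by
      by_contra hne
      exact Set.disjoint_left.mp
        ((IsLocalization.map_algebraMap_ne_top_iff_disjoint p.primeCompl S _).mp hne) hxp hxQ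
    exact htop ▸ le_top

end Ideal

section

variable {A : Type*} [CommRing A]

theorem symbPow_eq_iInf_of_associatedPrimes_eq_range {ι : Type*} (a : Ideal A)
    (P : ι → Ideal A) [∀ i, (P i).IsPrime] (h : associatedPrimes A (A ⧸ a) = Set.range P)
    (s : ℕ) :
    symbPow a s = ⨅ i, ((a ^ s).map (algebraMap A (Localization.AtPrime (P i)))).comap
      (algebraMap A (Localization.AtPrime (P i))) := by
  refine le_antisymm (le_iInf fun i ↦ sInf_le ⟨P i, h ▸ Set.mem_range_self i, rfl⟩) (le_sInf ?_)
  rintro _ ⟨p, hp, rfl⟩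
  rw [h] at hp
  obtain ⟨i, rfl⟩ := hp
  exact iInf_le _ i

theorem symbPow_eq_comap_map_of_isPrimary [IsNoetherianRing A] {Q : Ideal A} (hQ : Q.IsPrimary)
    (s : ℕ) :
    haveI := Ideal.isPrime_radical hQ
    symbPow Q s = ((Q ^ s).map (algebraMap A (Localization.AtPrime Q.radical))).comap
      (algebraMap A (Localization.AtPrime Q.radical)) := by
  have := Ideal.isPrime_radical hQ
  rw [symbPow_eq_iInf_of_associatedPrimes_eq_range Q (fun _ : Unit ↦ Q.radical)
    (by rw [associatedPrimes.eq_singleton_of_isPrimary hQ, Set.range_const])]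
  exact iInf_const

end

theorem symbPow_of_unmixed_primary_decomposition_general
    {A : Type*} [CommRing A] [IsNoetherianRing A] (a : Ideal A)
    (hunmixed : associatedPrimes A (A ⧸ a) = a.minimalPrimes)
    (d : ℕ) (Q : Fin d → Ideal A) (hprimary : ∀ i, (Q i).IsPrimary)
    (hdecomp : a = ⨅ i, Q i)
    (hirr₁ : ∀ i : Fin d, a ≠ ⨅ j ∈ ({j | j ≠ i} : Set (Fin d)), Q j)
    (hirr₂ : ∀ i j : Fin d, i ≠ j → (Q i).radical ≠ (Q j).radical)
    (s : ℕ) :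
    symbPow a s = ⨅ i, symbPow (Q i) s := by
  have := fun i ↦ Ideal.isPrime_radical (hprimary i)
  have hAss := Ideal.associatedPrimes_quotient_eq_range_radical hprimary hdecomp hirr₁ hirr₂
  rw [symbPow_eq_iInf_of_associatedPrimes_eq_range a _ hAss]
  refine iInf_congr fun i ↦ ?_
  have hmin : (Q i).radical ∈ a.minimalPrimes := hunmixed ▸ hAss ▸ Set.mem_range_self i
  have hloc : a.map (algebraMap A (Localization.AtPrime (Q i).radical)) =
      (Q i).map (algebraMap A (Localization.AtPrime (Q i).radical)) :=
    hdecomp ▸ Ideal.map_iInf_eq_map_of_not_le _ Q i fun j hji ↦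
      Ideal.not_le_of_mem_minimalPrimes_of_radical_ne hmin (hprimary j)
        (hdecomp ▸ iInf_le Q j) (hirr₂ j i hji)
  rw [symbPow_eq_comap_map_of_isPrimary (hprimary i), Ideal.map_pow, Ideal.map_pow, hloc]

theorem symbPow_of_unmixed_primary_decomposition
    {A : Type*} [CommRing A] [IsNoetherianRing A] (a : Ideal A) (ha : a ≠ ⊤)
    (hunmixed : associatedPrimes A (A ⧸ a) = a.minimalPrimes)
    (d : ℕ) (Q : Fin d → Ideal A) (hprimary : ∀ i, (Q i).IsPrimary)
    (hdecomp : a = ⨅ i, Q i)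
    (hirr₁ : ∀ i : Fin d, a ≠ ⨅ j ∈ ({j | j ≠ i} : Set (Fin d)), Q j)
    (hirr₂ : ∀ i j : Fin d, i ≠ j → (Q i).radical ≠ (Q j).radical)
    (s : ℕ) (hs : 1 ≤ s) :
    symbPow a s = ⨅ i, symbPow (Q i) s :=
  symbPow_of_unmixed_primary_decomposition_general a hunmixed d Q hprimary hdecomp hirr₁ hirr₂ s

end
end

section
/- Let k be a field, let (R, m) and (S, n) be standard graded k-algebras with m ≠ (0) and n ≠ (0), let I ⊆ m² and J ⊆ n² be homogeneous ideals, let T = R ⊗_k S, and let F = I + J + mn ⊆ T. Then F = (I + n) ∩ (J + m) as ideals of T. -/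
/-!
Since `I ⊆ m` and `J ⊆ n`, modularity of the ideal lattice reduces the identity to
`m ⊓ n = m * n` in `R ⊗[k] S`. For this, pick a `k`-linear projection `σ` of `R` onto `m`
(possible because `k` is a field): `σ ⊗ id` fixes the extension of `m`, and maps the extension
of `n`, which is spanned by tensors `r ⊗ b` with `b ∈ n`, into the span of the `σ r ⊗ b ∈ m * n`.
-/

open TensorProduct Algebra.TensorProduct

theorem sup_inf_sup_eq_of_le {α : Type*} [Lattice α] [IsModularLattice α] {a b c d : α}
    (hac : a ≤ c) (hbd : b ≤ d) : (a ⊔ d) ⊓ (b ⊔ c) = a ⊔ b ⊔ c ⊓ d := by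
  calc (a ⊔ d) ⊓ (b ⊔ c) = b ⊔ c ⊓ (a ⊔ d) := by
        rw [inf_comm, sup_inf_assoc_of_le c (hbd.trans le_sup_right)]
    _ = b ⊔ (a ⊔ d ⊓ c) := by rw [inf_comm, sup_inf_assoc_of_le d hac]
    _ = a ⊔ b ⊔ c ⊓ d := by rw [inf_comm, sup_left_comm, sup_assoc]

section TensorProduct

variable {k R S : Type*}

theorem range_map_le_map_includeLeft_mul_map_includeRight [CommSemiring k] [CommSemiring R]
    [Algebra k R] [CommSemiring S] [Algebra k S] {M N : Type*} [AddCommMonoid M] [Module k M]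
    [AddCommMonoid N] [Module k N] {p : Ideal R} {q : Ideal S} {f : M →ₗ[k] R} {g : N →ₗ[k] S}
    (hf : ∀ x, f x ∈ p) (hg : ∀ y, g y ∈ q) :
    LinearMap.range (TensorProduct.map f g) ≤
      (p.map (includeLeft : R →ₐ[k] R ⊗[k] S) *
        q.map (includeRight : S →ₐ[k] R ⊗[k] S)).restrictScalars k := by
  rw [range_map_eq_span_tmul, Submodule.span_le]
  rintro _ ⟨x, y, rfl⟩
  have hsplit : f x ⊗ₜ[k] g y =
      (includeLeft : R →ₐ[k] R ⊗[k] S) (f x) * (includeRight : S →ₐ[k] R ⊗[k] S) (g y) := by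
    simp only [includeLeft_apply, includeRight_apply, tmul_mul_tmul, mul_one, one_mul]
  rw [hsplit]
  exact Ideal.mul_mem_mul (Ideal.mem_map_of_mem _ (hf x)) (Ideal.mem_map_of_mem _ (hg y))

theorem map_includeLeft_inf_map_includeRight [Field k] [CommRing R] [Algebra k R] [CommRing S]
    [Algebra k S] (p : Ideal R) (q : Ideal S) :
    p.map (includeLeft : R →ₐ[k] R ⊗[k] S) ⊓ q.map includeRight =
      p.map (includeLeft : R →ₐ[k] R ⊗[k] S) * q.map includeRight := by
  refine le_antisymm (fun x ⟨hxp, hxq⟩ => ?_) Ideal.mul_le_inf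
  set p₀ := p.restrictScalars k
  obtain ⟨c, hc⟩ := p₀.exists_isCompl
  set σ : R →ₗ[k] R := p₀.subtype ∘ₗ p₀.projectionOnto c hc
  have hσ : σ ∘ₗ p₀.subtype = p₀.subtype := by
    rw [LinearMap.comp_assoc, Submodule.projectionOnto_comp_subtype, LinearMap.comp_id]
  obtain ⟨y, rfl⟩ : x ∈ LinearMap.range (LinearMap.rTensor S p₀.subtype) := by
    rwa [← Ideal.map_includeLeft_eq]
  obtain ⟨z, hz⟩ : _ ∈ LinearMap.range (LinearMap.lTensor R (q.restrictScalars k).subtype) := by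
    rwa [← Ideal.map_includeRight_eq]
  have hfix : LinearMap.rTensor S σ (LinearMap.rTensor S p₀.subtype y) =
      LinearMap.rTensor S p₀.subtype y := by
    rw [← LinearMap.comp_apply, ← LinearMap.rTensor_comp, hσ]
  rw [← hfix, ← hz, ← LinearMap.comp_apply, LinearMap.rTensor_comp_lTensor]
  exact range_map_le_map_includeLeft_mul_map_includeRight (fun r => (p₀.projectionOnto c hc r).2)
    (fun b => b.2) ⟨z, rfl⟩

end TensorProduct

theorem fiberProduct_eq_inf_general
    (k R S : Type*) [Field k] [CommRing R] [Algebra k R] [CommRing S] [Algebra k S]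
    (m : Ideal R)
    (n : Ideal S)
    (I : Ideal R) (hIm : I ≤ m ^ 2)
    (J : Ideal S) (hJn : J ≤ n ^ 2)
    -- the extensions of the various ideals to `T = R ⊗[k] S`
    (I' J' m' n' : Ideal (R ⊗[k] S))
    (hI' : I' = Ideal.map (Algebra.TensorProduct.includeLeft : R →ₐ[k] R ⊗[k] S) I)
    (hJ' : J' = Ideal.map (Algebra.TensorProduct.includeRight : S →ₐ[k] R ⊗[k] S) J)
    (hm' : m' = Ideal.map (Algebra.TensorProduct.includeLeft : R →ₐ[k] R ⊗[k] S) m)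
    (hn' : n' = Ideal.map (Algebra.TensorProduct.includeRight : S →ₐ[k] R ⊗[k] S) n)
    (F : Ideal (R ⊗[k] S)) (hF : F = I' + J' + m' * n') :
    F = (I' + n') ⊓ (J' + m') := by
  have hI'm' : I' ≤ m' := hI' ▸ hm' ▸ Ideal.map_mono (hIm.trans (Ideal.pow_le_self two_ne_zero))
  have hJ'n' : J' ≤ n' := hJ' ▸ hn' ▸ Ideal.map_mono (hJn.trans (Ideal.pow_le_self two_ne_zero))
  have hmn : m' ⊓ n' = m' * n' := hm' ▸ hn' ▸ map_includeLeft_inf_map_includeRight m n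
  simp only [hF, Submodule.add_eq_sup]
  rw [sup_inf_sup_eq_of_le hI'm' hJ'n', hmn]

theorem fiberProduct_eq_inf
    (k R S : Type*) [Field k] [CommRing R] [Algebra k R] [CommRing S] [Algebra k S]
    (𝒜 : ℕ → Submodule k R) [GradedAlgebra 𝒜] (ℬ : ℕ → Submodule k S) [GradedAlgebra ℬ]
    -- `R` and `S` are standard graded
    (hA0 : 𝒜 0 = 1) (hA1 : ∀ i : ℕ, 𝒜 (i + 1) = 𝒜 1 * 𝒜 i) (hAfg : Module.Finite k (𝒜 1))
    (hB0 : ℬ 0 = 1) (hB1 : ∀ i : ℕ, ℬ (i + 1) = ℬ 1 * ℬ i) (hBfg : Module.Finite k (ℬ 1))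
    -- the graded maximal ideals, assumed nonzero
    (m : Ideal R) (hm : m = (HomogeneousIdeal.irrelevant 𝒜).toIdeal) (hm0 : m ≠ ⊥)
    (n : Ideal S) (hn : n = (HomogeneousIdeal.irrelevant ℬ).toIdeal) (hn0 : n ≠ ⊥)
    (I : Ideal R) (hIm : I ≤ m ^ 2) (hIhom : I.IsHomogeneous 𝒜)
    (J : Ideal S) (hJn : J ≤ n ^ 2) (hJhom : J.IsHomogeneous ℬ)
    -- the extensions of the various ideals to `T = R ⊗[k] S`
    (I' J' m' n' : Ideal (R ⊗[k] S))
    (hI' : I' = Ideal.map (Algebra.TensorProduct.includeLeft : R →ₐ[k] R ⊗[k] S) I)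
    (hJ' : J' = Ideal.map (Algebra.TensorProduct.includeRight : S →ₐ[k] R ⊗[k] S) J)
    (hm' : m' = Ideal.map (Algebra.TensorProduct.includeLeft : R →ₐ[k] R ⊗[k] S) m)
    (hn' : n' = Ideal.map (Algebra.TensorProduct.includeRight : S →ₐ[k] R ⊗[k] S) n)
    (F : Ideal (R ⊗[k] S)) (hF : F = I' + J' + m' * n') :
    F = (I' + n') ⊓ (J' + m') :=
  fiberProduct_eq_inf_general k R S m n I hIm J hJn I' J' m' n' hI' hJ' hm' hn' F hF
end

section
/- Let k be a field, let R and S be polynomial rings over k in at least one variable each, with graded maximal ideals m and n, let I ⊆ m² and J ⊆ n² be proper homogeneous ideals, let T = R ⊗_k S, and let F = I + J + mn ⊆ T. Then for every integer s ≥ 1 one has F^s = I^s + J^s + mn·F^{s-1}, and consequently F^s = I^s + J^s + mn(I^{s-1} + J^{s-1}) + (mn)²(I^{s-2} + J^{s-2}) + ⋯ + (mn)^s. -/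
/- STATEMENT 6: k a field, R and S polynomial rings over k in at least one variable each,
with graded maximal ideals m and n, I ⊆ m² and J ⊆ n² proper homogeneous ideals,
T = R ⊗_k S, F = I + J + mn. Then for every s ≥ 1:
F^s = I^s + J^s + mn·F^{s-1}, and consequently
F^s = I^s + J^s + mn(I^{s-1} + J^{s-1}) + ⋯ + (mn)^s. -/

open MvPolynomial

noncomputable section

section Aux
variable {R : Type*} [CommRing R]

theorem abs1 (A B C : Ideal R) (hAB : A * B ≤ C * C) (n : ℕ) :
    (A + B + C) ^ (n + 1) = A ^ (n + 1) + B ^ (n + 1) + C * (A + B + C) ^ n := by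
  set F := A + B + C with hF
  have hAF : A ≤ F := le_trans le_sup_left le_sup_left
  have hBF : B ≤ F := le_trans le_sup_right le_sup_left
  have hCF : C ≤ F := le_sup_right
  apply le_antisymm
  · induction n with
    | zero => simp [hF]
    | succ m ih =>
      have h1 : F ^ (m + 2) = F * F ^ (m + 1) := by ring
      rw [h1]
      have h2 : F * F ^ (m + 1) ≤ F * (A ^ (m + 1) + B ^ (m + 1) + C * F ^ m) :=
        Ideal.mul_mono_right ih
      refine h2.trans ?_
      have expand : F * (A ^ (m + 1) + B ^ (m + 1) + C * F ^ m) =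
          A ^ (m + 2) + B ^ (m + 2) +
            (A * B ^ (m + 1) + B * A ^ (m + 1) + A * (C * F ^ m) + B * (C * F ^ m) +
              C * A ^ (m + 1) + C * B ^ (m + 1) + C * (C * F ^ m)) := by
        rw [hF]; ring
      rw [expand]
      have hCFm : C * F ^ m ≤ F ^ (m + 1) := by
        calc C * F ^ m ≤ F * F ^ m := Ideal.mul_mono_left hCF
          _ = F ^ (m + 1) := by ring
      have t1 : A * B ^ (m + 1) ≤ C * F ^ (m + 1) := by
        calc A * B ^ (m + 1) = A * B * B ^ m := by ring
          _ ≤ C * C * B ^ m := Ideal.mul_mono_left hAB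
          _ = C * (C * B ^ m) := by ring
          _ ≤ C * (F * F ^ m) :=
              Ideal.mul_mono_right (Ideal.mul_mono hCF (Ideal.pow_right_mono hBF m))
          _ = C * F ^ (m + 1) := by ring
      have t2 : B * A ^ (m + 1) ≤ C * F ^ (m + 1) := by
        calc B * A ^ (m + 1) = A * B * A ^ m := by ring
          _ ≤ C * C * A ^ m := Ideal.mul_mono_left hAB
          _ = C * (C * A ^ m) := by ring
          _ ≤ C * (F * F ^ m) :=
              Ideal.mul_mono_right (Ideal.mul_mono hCF (Ideal.pow_right_mono hAF m))
          _ = C * F ^ (m + 1) := by ring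
      have t3 : A * (C * F ^ m) ≤ C * F ^ (m + 1) := by
        calc A * (C * F ^ m) = C * (A * F ^ m) := by ring
          _ ≤ C * (F * F ^ m) :=
              Ideal.mul_mono_right (Ideal.mul_mono_left hAF)
          _ = C * F ^ (m + 1) := by ring
      have t4 : B * (C * F ^ m) ≤ C * F ^ (m + 1) := by
        calc B * (C * F ^ m) = C * (B * F ^ m) := by ring
          _ ≤ C * (F * F ^ m) :=
              Ideal.mul_mono_right (Ideal.mul_mono_left hBF)
          _ = C * F ^ (m + 1) := by ring
      have t5 : C * A ^ (m + 1) ≤ C * F ^ (m + 1) :=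
        Ideal.mul_mono_right (Ideal.pow_right_mono hAF (m + 1))
      have t6 : C * B ^ (m + 1) ≤ C * F ^ (m + 1) :=
        Ideal.mul_mono_right (Ideal.pow_right_mono hBF (m + 1))
      have t7 : C * (C * F ^ m) ≤ C * F ^ (m + 1) := Ideal.mul_mono_right hCFm
      have hrest : A * B ^ (m + 1) + B * A ^ (m + 1) + A * (C * F ^ m) + B * (C * F ^ m) +
          C * A ^ (m + 1) + C * B ^ (m + 1) + C * (C * F ^ m) ≤ C * F ^ (m + 1) := by
        simp only [Ideal.add_eq_sup]
        exact sup_le (sup_le (sup_le (sup_le (sup_le (sup_le t1 t2) t3) t4) t5) t6) t7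
      exact add_le_add le_rfl hrest
  · simp only [Ideal.add_eq_sup]
    have hFn : C * F ^ n ≤ F ^ (n + 1) := by
      calc C * F ^ n ≤ F * F ^ n := Ideal.mul_mono_left hCF
        _ = F ^ (n + 1) := by ring
    exact sup_le (sup_le (Ideal.pow_right_mono hAF (n + 1))
      (Ideal.pow_right_mono hBF (n + 1))) hFn

theorem abs2 (A B C : Ideal R) (hAB : A * B ≤ C * C) (n : ℕ) :
    (A + B + C) ^ (n + 1) =
      (∑ i ∈ Finset.range (n + 1), C ^ i * (A ^ (n + 1 - i) + B ^ (n + 1 - i))) + C ^ (n + 1) := by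
  induction n with
  | zero => simp [abs1 A B C hAB 0]
  | succ m ih =>
    rw [abs1 A B C hAB (m + 1)]
    conv_rhs => rw [Finset.sum_range_succ']
    rw [ih]
    simp only [Nat.succ_sub_succ_eq_sub, Nat.sub_zero, pow_zero, one_mul]
    rw [mul_add, Finset.mul_sum]
    have : ∀ i ∈ Finset.range (m + 1),
        C * (C ^ i * (A ^ (m + 1 - i) + B ^ (m + 1 - i))) =
          C ^ (i + 1) * (A ^ (m + 1 - i) + B ^ (m + 1 - i)) := fun i _ => by ring
    rw [Finset.sum_congr rfl this]
    ring

end Aux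


/-- The graded maximal ideal of a polynomial ring, generated by the variables. -/
def mxI (k : Type*) [Field k] (σ : Type*) : Ideal (MvPolynomial σ k) :=
  Ideal.span (Set.range MvPolynomial.X)

/-- An ideal of a polynomial ring is homogeneous if it contains every homogeneous
component of each of its elements. -/
def IsHomogIdeal {k : Type*} [Field k] {σ : Type*} (I : Ideal (MvPolynomial σ k)) : Prop :=
  ∀ f ∈ I, ∀ d : ℕ, MvPolynomial.homogeneousComponent d f ∈ I

theorem pow_fiberProduct_decomposition
    (k : Type*) [Field k] (a b : ℕ) (ha : 0 < a) (hb : 0 < b)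
    (I : Ideal (MvPolynomial (Fin a) k)) (hIm : I ≤ mxI k (Fin a) ^ 2)
    (hIproper : I ≠ ⊤) (hIhom : IsHomogIdeal I)
    (J : Ideal (MvPolynomial (Fin b) k)) (hJn : J ≤ mxI k (Fin b) ^ 2)
    (hJproper : J ≠ ⊤) (hJhom : IsHomogIdeal J)
    -- the extensions of the various ideals to `T`, the polynomial ring in the disjoint
    -- union of the variables
    (I' J' m' n' : Ideal (MvPolynomial (Fin a ⊕ Fin b) k))
    (hI' : I' = Ideal.map (rename (Sum.inl : Fin a → Fin a ⊕ Fin b) :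
      MvPolynomial (Fin a) k →ₐ[k] MvPolynomial (Fin a ⊕ Fin b) k) I)
    (hJ' : J' = Ideal.map (rename (Sum.inr : Fin b → Fin a ⊕ Fin b) :
      MvPolynomial (Fin b) k →ₐ[k] MvPolynomial (Fin a ⊕ Fin b) k) J)
    (hm' : m' = Ideal.map (rename (Sum.inl : Fin a → Fin a ⊕ Fin b) :
      MvPolynomial (Fin a) k →ₐ[k] MvPolynomial (Fin a ⊕ Fin b) k) (mxI k (Fin a)))
    (hn' : n' = Ideal.map (rename (Sum.inr : Fin b → Fin a ⊕ Fin b) :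
      MvPolynomial (Fin b) k →ₐ[k] MvPolynomial (Fin a ⊕ Fin b) k) (mxI k (Fin b)))
    (F : Ideal (MvPolynomial (Fin a ⊕ Fin b) k)) (hF : F = I' + J' + m' * n')
    (s : ℕ) (hs : 1 ≤ s) :
    F ^ s = I' ^ s + J' ^ s + m' * n' * F ^ (s - 1) ∧
      F ^ s = (⨆ i ∈ Finset.range s, (m' * n') ^ i * (I' ^ (s - i) + J' ^ (s - i))) +
        (m' * n') ^ s := by
  subst hF
  have hI2 : I' ≤ m' ^ 2 := by rw [hI', hm', ← Ideal.map_pow]; exact Ideal.map_mono hIm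
  have hJ2 : J' ≤ n' ^ 2 := by rw [hJ', hn', ← Ideal.map_pow]; exact Ideal.map_mono hJn
  have hAB : I' * J' ≤ (m' * n') * (m' * n') := by
    calc I' * J' ≤ m' ^ 2 * n' ^ 2 := Ideal.mul_mono hI2 hJ2
      _ = (m' * n') * (m' * n') := by ring
  obtain ⟨t, rfl⟩ : ∃ t, s = t + 1 := ⟨s - 1, (Nat.succ_pred_eq_of_pos hs).symm⟩
  constructor
  · simpa using abs1 I' J' (m' * n') hAB t
  · rw [← Finset.sup_eq_iSup, ← Ideal.sum_eq_sup]
    simpa using abs2 I' J' (m' * n') hAB t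

end
end

section
/- Let k be a field, let R and S be polynomial rings over k in at least one variable each, with graded maximal ideals m and n, let I ⊆ m² and J ⊆ n² be proper homogeneous ideals, let T = R ⊗_k S, and let F = I + J + mn ⊆ T. Then Min_T(T/F) ⊆ {p₁T + nT : p₁ ∈ Min_R(R/I)} ∪ {p₂T + mT : p₂ ∈ Min_S(S/J)}, and equality holds if both dim(R/I) > 0 and dim(S/J) > 0. -/
/- STATEMENT 9: k a field, R and S polynomial rings over k in at least one variable each
with graded maximal ideals m and n, I ⊆ m² and J ⊆ n² proper homogeneous ideals,
T = R ⊗_k S, F = I + J + mn. Then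
Min_T(T/F) ⊆ {p₁T + nT : p₁ ∈ Min_R(R/I)} ∪ {p₂T + mT : p₂ ∈ Min_S(S/J)},
with equality if both dim(R/I) > 0 and dim(S/J) > 0. -/

open MvPolynomial

noncomputable section

/-! A prime over `F` contains `𝔪𝔫`, hence contains `𝔫T` or `𝔪T`; by symmetry say `𝔫T`.
Killing the variables of `S` is a retraction `T → R` with kernel `𝔫T` under which `F` becomes
`I`, so the minimal primes of `F` containing `𝔫T` are the contractions `𝔭T + 𝔫T` of the minimal
primes `𝔭` of `I`. Such a contraction can fail to be minimal over `F` only if a smaller prime over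
`F` contains `𝔪T`, which forces `𝔭 = 𝔪`. For homogeneous `I` the ideal `𝔪` is a minimal prime
only when `R/I` has dimension `0`: the homogeneous core of any prime over `I` is a prime over `I`
inside `𝔪`, hence equal to `𝔪`. -/

namespace Ideal

variable {T R : Type*} [CommRing T] [CommRing R]

theorem mem_minimalPrimes_of_le_of_le {F G P : Ideal T} (hP : P ∈ F.minimalPrimes)
    (hFG : F ≤ G) (hGP : G ≤ P) : P ∈ G.minimalPrimes :=
  ⟨⟨hP.1.1, hGP⟩, fun _ hQ hQP => hP.2 ⟨hQ.1, hFG.trans hQ.2⟩ hQP⟩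

theorem mem_minimalPrimes_of_mem_minimalPrimes_sup {F N P : Ideal T}
    (hP : P ∈ (F ⊔ N).minimalPrimes)
    (hN : ∀ Q : Ideal T, Q.IsPrime → F ≤ Q → Q ≤ P → N ≤ Q) : P ∈ F.minimalPrimes :=
  ⟨⟨hP.1.1, le_sup_left.trans hP.1.2⟩,
    fun Q hQ hQP => hP.2 ⟨hQ.1, sup_le hQ.2 (hN Q hQ.1 hQ.2 hQP)⟩ hQP⟩

theorem comap_eq_map_sup_ker_of_leftInverse {F G : Type*} [FunLike F T R] [RingHomClass F T R]
    [FunLike G R T] [RingHomClass G R T] {φ : F} {ρ : G} (h : Function.LeftInverse φ ρ)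
    (p : Ideal R) : p.comap φ = p.map ρ ⊔ RingHom.ker φ := by
  refine le_antisymm (fun x hx => ?_) (sup_le (map_le_iff_le_comap.mpr fun y hy => ?_) ?_)
  · rw [← add_sub_cancel (ρ (φ x)) x]
    refine Submodule.add_mem_sup (mem_map_of_mem ρ hx) (RingHom.mem_ker.mpr ?_)
    rw [map_sub, h, sub_self]
  · exact show φ (ρ y) ∈ p by rwa [h y]
  · exact fun x hx => by simp [RingHom.mem_ker.mp hx]

end Ideal

namespace MvPolynomial

variable {k : Type*} [Field k] {σ : Type*}

theorem mxI_eq_ker_constantCoeff :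
    mxI k σ = RingHom.ker (constantCoeff : MvPolynomial σ k →+* k) := by
  ext x
  rw [mxI, ← Set.image_univ, mem_ideal_span_X_image, RingHom.mem_ker, constantCoeff_eq]
  simp only [Set.mem_univ, true_and, mem_support_iff]
  refine ⟨fun h => by_contra fun h0 => ?_, fun h m hm => ?_⟩
  · simpa using h 0 h0
  · by_contra! hm0
    rw [show m = 0 from Finsupp.ext hm0] at hm
    exact hm h

theorem mxI_isMaximal : (mxI k σ).IsMaximal := by
  rw [mxI_eq_ker_constantCoeff]
  exact RingHom.ker_isMaximal_of_surjective _ fun a => ⟨C a, constantCoeff_C σ a⟩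

section Homogeneous

attribute [local instance] gradedAlgebra

theorem isHomogIdeal_iff_isHomogeneous (I : Ideal (MvPolynomial σ k)) :
    IsHomogIdeal I ↔ I.IsHomogeneous (homogeneousSubmodule σ k) := by
  have hdecomp (f : MvPolynomial σ k) (d : ℕ) :
      (DirectSum.decompose (homogeneousSubmodule σ k) f d : MvPolynomial σ k) =
        homogeneousComponent d f :=
    decomposition.decompose'_apply f d
  simp only [IsHomogIdeal, Ideal.IsHomogeneous, Submodule.IsHomogeneous,
    DirectSum.SetLike.IsHomogeneous, hdecomp]
  exact ⟨fun h d f hf => h f hf d, fun h f hf d => h d hf⟩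

theorem IsHomogIdeal.le_mxI {I : Ideal (MvPolynomial σ k)} (hI : IsHomogIdeal I) (hI' : I ≠ ⊤) :
    I ≤ mxI k σ := by
  intro f hf
  have hC : C (coeff 0 f) ∈ I := homogeneousComponent_zero f ▸ hI f hf 0
  rw [mxI_eq_ker_constantCoeff, RingHom.mem_ker, constantCoeff_eq]
  by_contra h0
  exact hI' (I.eq_top_of_isUnit_mem hC ((isUnit_iff_ne_zero.mpr h0).map C))

theorem mxI_le_of_mem_minimalPrimes {I q : Ideal (MvPolynomial σ k)} (hI : IsHomogIdeal I)
    (hm : mxI k σ ∈ I.minimalPrimes) (hq : q.IsPrime) (hIq : I ≤ q) : mxI k σ ≤ q := by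
  set c := (q.homogeneousCore (homogeneousSubmodule σ k)).toIdeal
  have hcq : c ≤ q := Ideal.toIdeal_homogeneousCore_le _ q
  have hIc : I ≤ c := by
    rw [← ((isHomogIdeal_iff_isHomogeneous I).mp hI).toIdeal_homogeneousCore_eq_self]
    exact Ideal.homogeneousCore_mono _ hIq
  have hc : c.IsPrime := hq.homogeneousCore
  have hcm : c ≤ mxI k σ :=
    ((isHomogIdeal_iff_isHomogeneous c).mpr (Ideal.homogeneousCore _ q).isHomogeneous).le_mxI
      hc.ne_top
  exact (hm.2 ⟨hc, hIc⟩ hcm).trans hcq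

theorem ringKrullDim_quotient_nonpos_of_mxI_mem_minimalPrimes {I : Ideal (MvPolynomial σ k)}
    (hI : IsHomogIdeal I) (hm : mxI k σ ∈ I.minimalPrimes) :
    ringKrullDim (MvPolynomial σ k ⧸ I) ≤ 0 := by
  have : Ring.KrullDimLE 0 (MvPolynomial σ k ⧸ I) := Ring.KrullDimLE.mk₀ fun J hJ => by
    have hc : (J.comap (Ideal.Quotient.mk I)).IsPrime := hJ.comap _
    have hIc : I ≤ J.comap (Ideal.Quotient.mk I) := by
      simpa using Ideal.ker_le_comap (Ideal.Quotient.mk I) (K := J)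
    apply Ideal.isMaximal_of_isIntegral_of_isMaximal_comap (R := MvPolynomial σ k)
    rw [Ideal.Quotient.algebraMap_eq,
      ← mxI_isMaximal.eq_of_le hc.ne_top (mxI_le_of_mem_minimalPrimes hI hm hc hIc)]
    exact mxI_isMaximal
  exact_mod_cast Ring.krullDimLE_iff.mp this

end Homogeneous

open Function Set

section killCompl

variable {R : Type*} [CommRing R] {ι : Type*} {f : σ → ι} (hf : Injective f)

theorem killCompl_surjective : Surjective (killCompl (R := R) hf) :=
  fun p => ⟨rename f p, killCompl_rename_app hf p⟩

theorem ker_killCompl : RingHom.ker (killCompl (R := R) hf) = Ideal.span (X '' (range f)ᶜ) := by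
  set N : Ideal (MvPolynomial ι R) := Ideal.span (X '' (range f)ᶜ)
  have hX {i : ι} (hi : i ∉ range f) : killCompl (R := R) hf (X i) = 0 := by
    simp [killCompl, hi]
  refine le_antisymm (fun x hx => ?_) ?_
  · have hmod : (Ideal.Quotient.mkₐ R N).comp ((rename f).comp (killCompl hf)) =
        Ideal.Quotient.mkₐ R N := by
      refine algHom_ext fun i => ?_
      by_cases hi : i ∈ range f
      · obtain ⟨j, rfl⟩ := hi
        rw [AlgHom.comp_apply, AlgHom.comp_apply, ← rename_X f j, killCompl_rename_app]
      · simp only [AlgHom.comp_apply, hX hi, map_zero, Ideal.Quotient.mkₐ_eq_mk]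
        exact (Ideal.Quotient.eq_zero_iff_mem.mpr
          (Ideal.subset_span (s := X '' (range f)ᶜ) ⟨i, hi, rfl⟩)).symm
    have hx' := congr($hmod x)
    simp only [AlgHom.comp_apply, RingHom.mem_ker.mp hx, map_zero,
      Ideal.Quotient.mkₐ_eq_mk] at hx'
    exact Ideal.Quotient.eq_zero_iff_mem.mp hx'.symm
  · rw [Ideal.span_le]
    rintro _ ⟨i, hi, rfl⟩
    exact hX hi

theorem comap_killCompl (p : Ideal (MvPolynomial σ R)) :
    p.comap (killCompl hf) = p.map (rename f) ⊔ Ideal.span (X '' (range f)ᶜ) := by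
  rw [← ker_killCompl hf]
  exact Ideal.comap_eq_map_sup_ker_of_leftInverse (killCompl_rename_app hf) p

theorem minimalPrimes_comap_killCompl (I : Ideal (MvPolynomial σ R)) :
    (I.comap (killCompl hf)).minimalPrimes =
      (fun p => p.comap (killCompl hf)) '' I.minimalPrimes :=
  Ideal.comap_minimalPrimes_eq_of_surjective
    (f := (killCompl (R := R) hf : MvPolynomial ι R →+* MvPolynomial σ R))
    (killCompl_surjective hf) I

end killCompl

variable {τ ι : Type*}

theorem map_rename_mxI (f : σ → ι) : (mxI k σ).map (rename f) = Ideal.span (X '' range f) := by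
  rw [mxI, Ideal.map_span, ← range_comp, ← range_comp]
  congr 2
  ext i
  simp

def fiberIdeal (f : σ → ι) (g : τ → ι) (I : Ideal (MvPolynomial σ k))
    (J : Ideal (MvPolynomial τ k)) : Ideal (MvPolynomial ι k) :=
  I.map (rename f) ⊔ J.map (rename g) ⊔ (mxI k σ).map (rename f) * (mxI k τ).map (rename g)

theorem fiberIdeal_comm (f : σ → ι) (g : τ → ι) (I : Ideal (MvPolynomial σ k))
    (J : Ideal (MvPolynomial τ k)) : fiberIdeal f g I J = fiberIdeal g f J I := by
  rw [fiberIdeal, fiberIdeal, sup_comm (I.map _), mul_comm]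

variable {f : σ → ι} {g : τ → ι} {I : Ideal (MvPolynomial σ k)} {J : Ideal (MvPolynomial τ k)}

theorem comap_killCompl_eq_map_sup_map_mxI (hf : Injective f)
    (hfg : IsCompl (range f) (range g)) (p : Ideal (MvPolynomial σ k)) :
    p.comap (killCompl hf) = p.map (rename f) ⊔ (mxI k τ).map (rename g) := by
  rw [comap_killCompl, hfg.compl_eq, map_rename_mxI]

theorem fiberIdeal_sup_map_mxI (hf : Injective f) (hfg : IsCompl (range f) (range g))
    (hJ : J ≤ mxI k τ) :
    fiberIdeal f g I J ⊔ (mxI k τ).map (rename g) = I.comap (killCompl hf) := by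
  rw [comap_killCompl_eq_map_sup_map_mxI hf hfg, fiberIdeal]
  refine le_antisymm (sup_le (sup_le (sup_le le_sup_left ?_) ?_) le_sup_right)
    (sup_le_sup_right (le_sup_left.trans le_sup_left) _)
  · exact le_sup_of_le_right (Ideal.map_mono hJ)
  · exact le_sup_of_le_right Ideal.mul_le_right

theorem mem_image_of_mem_minimalPrimes_fiberIdeal (hf : Injective f)
    (hfg : IsCompl (range f) (range g)) (hJ : J ≤ mxI k τ) {P : Ideal (MvPolynomial ι k)}
    (hP : P ∈ (fiberIdeal f g I J).minimalPrimes) (hnP : (mxI k τ).map (rename g) ≤ P) :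
    P ∈ (fun p => p.map (rename f) ⊔ (mxI k τ).map (rename g)) '' I.minimalPrimes := by
  have hP' := Ideal.mem_minimalPrimes_of_le_of_le hP le_sup_left (sup_le hP.1.2 hnP)
  rw [fiberIdeal_sup_map_mxI hf hfg hJ, minimalPrimes_comap_killCompl] at hP'
  obtain ⟨p, hp, rfl⟩ := hP'
  exact ⟨p, hp, (comap_killCompl_eq_map_sup_map_mxI hf hfg p).symm⟩

theorem map_sup_map_mxI_mem_minimalPrimes_fiberIdeal (hf : Injective f)
    (hfg : IsCompl (range f) (range g)) (hI : IsHomogIdeal I)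
    (hdim : 0 < ringKrullDim (MvPolynomial σ k ⧸ I)) (hJ : J ≤ mxI k τ)
    {p : Ideal (MvPolynomial σ k)} (hp : p ∈ I.minimalPrimes) :
    p.map (rename f) ⊔ (mxI k τ).map (rename g) ∈ (fiberIdeal f g I J).minimalPrimes := by
  rw [← comap_killCompl_eq_map_sup_map_mxI hf hfg]
  refine Ideal.mem_minimalPrimes_of_mem_minimalPrimes_sup (N := (mxI k τ).map (rename g)) ?_
    fun Q hQ hFQ hQp => (hQ.mul_le.mp (le_sup_right.trans hFQ)).resolve_left fun hmQ => ?_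
  · rw [fiberIdeal_sup_map_mxI hf hfg hJ, minimalPrimes_comap_killCompl]
    exact ⟨p, hp, rfl⟩
  · have hmp : mxI k σ ≤ p := fun x hx => by
      simpa using hQp (hmQ (Ideal.mem_map_of_mem _ hx))
    rw [← mxI_isMaximal.eq_of_le hp.1.1.ne_top hmp] at hp
    exact hdim.not_ge (ringKrullDim_quotient_nonpos_of_mxI_mem_minimalPrimes hI hp)

end MvPolynomial

theorem minimalPrimes_fiberProduct_general
    (k : Type*) [Field k] (a b : ℕ)
    (I : Ideal (MvPolynomial (Fin a) k)) (hIm : I ≤ mxI k (Fin a) ^ 2)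
    (hIhom : IsHomogIdeal I)
    (J : Ideal (MvPolynomial (Fin b) k)) (hJn : J ≤ mxI k (Fin b) ^ 2)
    (hJhom : IsHomogIdeal J)
    (I' J' m' n' : Ideal (MvPolynomial (Fin a ⊕ Fin b) k))
    (hI' : I' = Ideal.map (rename (Sum.inl : Fin a → Fin a ⊕ Fin b) :
      MvPolynomial (Fin a) k →ₐ[k] MvPolynomial (Fin a ⊕ Fin b) k) I)
    (hJ' : J' = Ideal.map (rename (Sum.inr : Fin b → Fin a ⊕ Fin b) :
      MvPolynomial (Fin b) k →ₐ[k] MvPolynomial (Fin a ⊕ Fin b) k) J)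
    (hm' : m' = Ideal.map (rename (Sum.inl : Fin a → Fin a ⊕ Fin b) :
      MvPolynomial (Fin a) k →ₐ[k] MvPolynomial (Fin a ⊕ Fin b) k) (mxI k (Fin a)))
    (hn' : n' = Ideal.map (rename (Sum.inr : Fin b → Fin a ⊕ Fin b) :
      MvPolynomial (Fin b) k →ₐ[k] MvPolynomial (Fin a ⊕ Fin b) k) (mxI k (Fin b)))
    (F : Ideal (MvPolynomial (Fin a ⊕ Fin b) k)) (hF : F = I' + J' + m' * n') :
    F.minimalPrimes ⊆
      ((fun p => Ideal.map (rename (Sum.inl : Fin a → Fin a ⊕ Fin b) :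
          MvPolynomial (Fin a) k →ₐ[k] MvPolynomial (Fin a ⊕ Fin b) k) p + n') ''
        I.minimalPrimes) ∪
      ((fun q => Ideal.map (rename (Sum.inr : Fin b → Fin a ⊕ Fin b) :
          MvPolynomial (Fin b) k →ₐ[k] MvPolynomial (Fin a ⊕ Fin b) k) q + m') ''
        J.minimalPrimes) ∧
    (0 < ringKrullDim (MvPolynomial (Fin a) k ⧸ I) →
     0 < ringKrullDim (MvPolynomial (Fin b) k ⧸ J) →
      F.minimalPrimes =
        ((fun p => Ideal.map (rename (Sum.inl : Fin a → Fin a ⊕ Fin b) :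
            MvPolynomial (Fin a) k →ₐ[k] MvPolynomial (Fin a ⊕ Fin b) k) p + n') ''
          I.minimalPrimes) ∪
        ((fun q => Ideal.map (rename (Sum.inr : Fin b → Fin a ⊕ Fin b) :
            MvPolynomial (Fin b) k →ₐ[k] MvPolynomial (Fin a ⊕ Fin b) k) q + m') ''
          J.minimalPrimes)) := by
  subst hI' hJ' hm' hn' hF
  have hI : I ≤ mxI k (Fin a) := hIm.trans (Ideal.pow_le_self two_ne_zero)
  have hJ : J ≤ mxI k (Fin b) := hJn.trans (Ideal.pow_le_self two_ne_zero)
  have hinl : IsCompl (Set.range (Sum.inl : Fin a → Fin a ⊕ Fin b)) (Set.range Sum.inr) :=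
    Set.isCompl_range_inl_range_inr
  have hsub := fun P (hP : P ∈ (fiberIdeal Sum.inl Sum.inr I J).minimalPrimes) =>
    (hP.1.1.mul_le.mp (le_sup_right.trans hP.1.2)).symm.imp
      (mem_image_of_mem_minimalPrimes_fiberIdeal Sum.inl_injective hinl hJ hP)
      (mem_image_of_mem_minimalPrimes_fiberIdeal Sum.inr_injective hinl.symm hI
        (fiberIdeal_comm (k := k) Sum.inl Sum.inr I J ▸ hP))
  refine ⟨hsub, fun hdI hdJ => Set.Subset.antisymm hsub ?_⟩
  rintro P (⟨p, hp, rfl⟩ | ⟨q, hq, rfl⟩)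
  · exact map_sup_map_mxI_mem_minimalPrimes_fiberIdeal Sum.inl_injective hinl hIhom hdI hJ hp
  · show _ ∈ (fiberIdeal Sum.inl Sum.inr I J).minimalPrimes
    rw [fiberIdeal_comm]
    exact map_sup_map_mxI_mem_minimalPrimes_fiberIdeal Sum.inr_injective hinl.symm hJhom hdJ hI
      hq

theorem minimalPrimes_fiberProduct
    (k : Type*) [Field k] (a b : ℕ) (ha : 0 < a) (hb : 0 < b)
    (I : Ideal (MvPolynomial (Fin a) k)) (hIm : I ≤ mxI k (Fin a) ^ 2)
    (hIproper : I ≠ ⊤) (hIhom : IsHomogIdeal I)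
    (J : Ideal (MvPolynomial (Fin b) k)) (hJn : J ≤ mxI k (Fin b) ^ 2)
    (hJproper : J ≠ ⊤) (hJhom : IsHomogIdeal J)
    (I' J' m' n' : Ideal (MvPolynomial (Fin a ⊕ Fin b) k))
    (hI' : I' = Ideal.map (rename (Sum.inl : Fin a → Fin a ⊕ Fin b) :
      MvPolynomial (Fin a) k →ₐ[k] MvPolynomial (Fin a ⊕ Fin b) k) I)
    (hJ' : J' = Ideal.map (rename (Sum.inr : Fin b → Fin a ⊕ Fin b) :
      MvPolynomial (Fin b) k →ₐ[k] MvPolynomial (Fin a ⊕ Fin b) k) J)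
    (hm' : m' = Ideal.map (rename (Sum.inl : Fin a → Fin a ⊕ Fin b) :
      MvPolynomial (Fin a) k →ₐ[k] MvPolynomial (Fin a ⊕ Fin b) k) (mxI k (Fin a)))
    (hn' : n' = Ideal.map (rename (Sum.inr : Fin b → Fin a ⊕ Fin b) :
      MvPolynomial (Fin b) k →ₐ[k] MvPolynomial (Fin a ⊕ Fin b) k) (mxI k (Fin b)))
    (F : Ideal (MvPolynomial (Fin a ⊕ Fin b) k)) (hF : F = I' + J' + m' * n') :
    F.minimalPrimes ⊆
      ((fun p => Ideal.map (rename (Sum.inl : Fin a → Fin a ⊕ Fin b) :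
          MvPolynomial (Fin a) k →ₐ[k] MvPolynomial (Fin a ⊕ Fin b) k) p + n') ''
        I.minimalPrimes) ∪
      ((fun q => Ideal.map (rename (Sum.inr : Fin b → Fin a ⊕ Fin b) :
          MvPolynomial (Fin b) k →ₐ[k] MvPolynomial (Fin a ⊕ Fin b) k) q + m') ''
        J.minimalPrimes) ∧
    (0 < ringKrullDim (MvPolynomial (Fin a) k ⧸ I) →
     0 < ringKrullDim (MvPolynomial (Fin b) k ⧸ J) →
      F.minimalPrimes =
        ((fun p => Ideal.map (rename (Sum.inl : Fin a → Fin a ⊕ Fin b) :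
            MvPolynomial (Fin a) k →ₐ[k] MvPolynomial (Fin a ⊕ Fin b) k) p + n') ''
          I.minimalPrimes) ∪
        ((fun q => Ideal.map (rename (Sum.inr : Fin b → Fin a ⊕ Fin b) :
            MvPolynomial (Fin b) k →ₐ[k] MvPolynomial (Fin a ⊕ Fin b) k) q + m') ''
          J.minimalPrimes)) :=
  minimalPrimes_fiberProduct_general k a b I hIm hIhom J hJn hJhom I' J' m' n' hI' hJ' hm' hn' F hF

end
end

section
/- Let k be a field, let R and S be polynomial rings over k in at least one variable each, with graded maximal ideals m and n, let I ⊆ m² and J ⊆ n² be proper homogeneous ideals, let T = R ⊗_k S, and let F = I + J + mn ⊆ T. If min{depth(R/I), depth(S/J)} = 0, then for every integer s ≥ 1 the symbolic and ordinary powers of F coincide: F^{(s)} = F^s. -/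
/-!
`F` is homogeneous, hence so is `F ^ s`, and a homogeneous ideal `Q` of a polynomial ring is
saturated with respect to every `u` outside the graded maximal ideal `M`: with `c` the constant
term of `u`, the difference `c ^ (d + 1) - (c - u) ^ (d + 1)` is a multiple of `u` and
`(c - u) ^ (d + 1) ∈ M ^ (d + 1)`, so comparing degree-`d` components of `u x ∈ Q` puts the
degree-`d` component of `x` in `Q`. Thus the `M`-primary component of `F ^ s` is `F ^ s` itself,
and the symbolic power equals the ordinary one as soon as `M ∈ Ass(T/F)`.

If `m x ⊆ I` with `x ∉ I`, then `x ∈ m` because `I ⊆ m²`, so the variables of `R` multiply `x`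
into `I` and those of `S` multiply it into `mn`; and `x ∉ F` because the retraction `T → R`
killing the variables of `S` maps `F` into `I`. So `M ∈ Ass(T/F)`; the case `n ∈ Ass(S/J)` is
symmetric.
-/

open MvPolynomial

noncomputable section

section CommRing

variable {A : Type*} [CommRing A]

theorem Submodule.colon_bot_singleton_quotient_mk (F : Ideal A) (z : A) :
    (⊥ : Submodule A (A ⧸ F)).colon {Submodule.Quotient.mk z} = F.colon {z} := by
  ext r
  rw [Submodule.mem_colon_singleton, Submodule.mem_colon_singleton, Submodule.mem_bot,
    ← Submodule.Quotient.mk_smul, Submodule.Quotient.mk_eq_zero]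

theorem exists_notMem_eq_colon_of_mem_associatedPrimes [IsNoetherianRing A] {P F : Ideal A}
    (hP : P ∈ associatedPrimes A (A ⧸ F)) : ∃ z ∉ F, P = F.colon {z} := by
  obtain ⟨hPprime, y, hy⟩ := isAssociatedPrime_iff.mp hP
  obtain ⟨z, rfl⟩ := Submodule.Quotient.mk_surjective _ y
  rw [Submodule.colon_bot_singleton_quotient_mk] at hy
  refine ⟨z, fun hz => hPprime.ne_top ?_, hy⟩
  rwa [hy, Submodule.colon_eq_top_iff_subset, Set.singleton_subset_iff]

theorem Ideal.IsMaximal.mem_associatedPrimes_quotient {M F : Ideal A} (hM : M.IsMaximal) {z : A}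
    (hz : z ∉ F) (hMz : M ≤ F.colon {z}) : M ∈ associatedPrimes A (A ⧸ F) := by
  have hcolon : F.colon {z} ≠ ⊤ := by
    rwa [Ne, Submodule.colon_eq_top_iff_subset, Set.singleton_subset_iff]
  refine ⟨hM.isPrime, Submodule.Quotient.mk z, ?_⟩
  rw [Submodule.colon_bot_singleton_quotient_mk, ← hM.eq_of_le hcolon hMz, hM.isPrime.radical]

theorem pow_le_symbPow (a : Ideal A) (s : ℕ) : a ^ s ≤ symbPow a s := by
  refine le_sInf ?_
  rintro _ ⟨P, hP, rfl⟩
  exact Ideal.le_comap_map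

theorem symbPow_le_pow_of_mem_associatedPrimes {a P : Ideal A} {s : ℕ}
    (hP : P ∈ associatedPrimes A (A ⧸ a)) (hsat : ∀ u ∉ P, ∀ x, u * x ∈ a ^ s → x ∈ a ^ s) :
    symbPow a s ≤ a ^ s := by
  have : P.IsPrime := hP.isPrime
  refine (sInf_le ⟨P, hP, rfl⟩ : symbPow a s ≤ _).trans fun x hx => ?_
  obtain ⟨u, hu, hux⟩ :=
    (IsLocalization.algebraMap_mem_map_algebraMap_iff P.primeCompl _ _ x).mp hx
  exact hsat u hu x hux

end CommRing

section Polynomial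

variable {k : Type*} [Field k] {σ : Type*}

theorem mem_mxI_iff {f : MvPolynomial σ k} : f ∈ mxI k σ ↔ constantCoeff f = 0 := by
  have h := mem_pow_idealOfVars_iff' 1 f
  rw [pow_one] at h
  refine h.trans ⟨fun h0 => h0 0 (by simp), fun h0 m hm => ?_⟩
  rwa [(Finsupp.degree_eq_zero_iff m).mp (Nat.lt_one_iff.mp hm)]

theorem X_mem_mxI (i : σ) : (X i : MvPolynomial σ k) ∈ mxI k σ :=
  Ideal.subset_span ⟨i, rfl⟩

theorem isMaximal_mxI : (mxI k σ).IsMaximal := by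
  have hker : mxI k σ = RingHom.ker (constantCoeff : MvPolynomial σ k →+* k) := by
    ext f
    exact mem_mxI_iff
  rw [hker]
  exact RingHom.ker_isMaximal_of_surjective _ fun c => ⟨C c, constantCoeff_C σ c⟩

theorem mem_mxI_of_X_mul_mem_sq (i : σ) {x : MvPolynomial σ k} (h : X i * x ∈ mxI k σ ^ 2) :
    x ∈ mxI k σ := by
  have hcoeff := (mem_pow_idealOfVars_iff' 2 _).mp h (Finsupp.single i 1 + 0) (by simp)
  rwa [coeff_X_mul, ← constantCoeff_eq, ← mem_mxI_iff] at hcoeff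

theorem homogeneousComponent_eq_zero_of_mem_mxI_pow {t d : ℕ} {g : MvPolynomial σ k}
    (hg : g ∈ mxI k σ ^ t) (hd : d < t) : homogeneousComponent d g = 0 := by
  ext m
  rw [coeff_homogeneousComponent, coeff_zero]
  split_ifs with h
  · exact (mem_pow_idealOfVars_iff' t g).mp hg m (h ▸ hd)
  · rfl

theorem IsHomogIdeal.mem_of_mul_mem {Q : Ideal (MvPolynomial σ k)} (hQ : IsHomogIdeal Q)
    {u x : MvPolynomial σ k} (hu : u ∉ mxI k σ) (h : u * x ∈ Q) : x ∈ Q := by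
  set c := constantCoeff u
  have hc : c ≠ 0 := fun h0 => hu (mem_mxI_iff.mpr h0)
  have hv : C c - u ∈ mxI k σ := mem_mxI_iff.mpr (by simp [c])
  have hcomp : ∀ d, homogeneousComponent d x ∈ Q := by
    intro d
    obtain ⟨g, hg⟩ := sub_dvd_pow_sub_pow (C c) (C c - u) (d + 1)
    rw [sub_sub_cancel] at hg
    have hmem : C c ^ (d + 1) * x - (C c - u) ^ (d + 1) * x ∈ Q := by
      rw [← sub_mul, hg, mul_comm u g, mul_assoc]
      exact Q.mul_mem_left g h
    have hdeg := hQ _ hmem d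
    rw [map_sub, homogeneousComponent_eq_zero_of_mem_mxI_pow
      (Ideal.mul_mem_right x _ (Ideal.pow_mem_pow hv _)) d.lt_succ_self, sub_zero, ← map_pow,
      homogeneousComponent_C_mul] at hdeg
    exact (Q.unit_mul_mem_iff_mem ((pow_ne_zero _ hc).isUnit.map C)).mp hdeg
  rw [← sum_homogeneousComponent x]
  exact Q.sum_mem fun d _ => hcomp d

end Polynomial

section Homogeneous

attribute [local instance] MvPolynomial.gradedAlgebra

variable {k : Type*} [Field k] {σ τ : Type*}

theorem isHomogIdeal_iff_isHomogeneous {Q : Ideal (MvPolynomial σ k)} :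
    IsHomogIdeal Q ↔ Q.IsHomogeneous (homogeneousSubmodule σ k) := by
  have hdec : ∀ f d, (DirectSum.decompose (homogeneousSubmodule σ k) f d : MvPolynomial σ k) =
      homogeneousComponent d f := decomposition.decompose'_apply
  refine ⟨fun h d f hf => ?_, fun h f hf d => ?_⟩
  · rw [hdec]
    exact h f hf d
  · rw [← hdec]
    exact h d hf

theorem isHomogeneous_mxI : (mxI k σ).IsHomogeneous (homogeneousSubmodule σ k) := by
  apply Ideal.homogeneous_span
  rintro _ ⟨i, rfl⟩
  exact ⟨1, (mem_homogeneousSubmodule _ _).mpr (isHomogeneous_X k i)⟩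

theorem Ideal.IsHomogeneous.map_rename (f : σ → τ) {Q : Ideal (MvPolynomial σ k)}
    (hQ : Q.IsHomogeneous (homogeneousSubmodule σ k)) :
    (Q.map (rename f)).IsHomogeneous (homogeneousSubmodule τ k) := by
  rw [Ideal.IsHomogeneous.iff_exists] at hQ
  obtain ⟨S, rfl⟩ := hQ
  rw [Ideal.map_span]
  apply Ideal.homogeneous_span
  rintro _ ⟨_, ⟨⟨p, i, hp⟩, -, rfl⟩, rfl⟩
  exact ⟨i, (mem_homogeneousSubmodule _ _).mpr
    (((mem_homogeneousSubmodule _ _).mp hp).rename_isHomogeneous)⟩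

theorem Ideal.IsHomogeneous.pow {Q : Ideal (MvPolynomial σ k)}
    (hQ : Q.IsHomogeneous (homogeneousSubmodule σ k)) (s : ℕ) :
    (Q ^ s).IsHomogeneous (homogeneousSubmodule σ k) := by
  induction s with
  | zero => simpa [Ideal.one_eq_top] using Ideal.IsHomogeneous.top (homogeneousSubmodule σ k)
  | succ t ih => rw [pow_succ]; exact ih.mul hQ

end Homogeneous

section FiberProduct

variable {k : Type*} [Field k] {σ₁ σ₂ τ : Type*}

def fiberProduct (ι : σ₁ → τ) (κ : σ₂ → τ) (I : Ideal (MvPolynomial σ₁ k))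
    (J : Ideal (MvPolynomial σ₂ k)) : Ideal (MvPolynomial τ k) :=
  I.map (rename ι) + J.map (rename κ) + (mxI k σ₁).map (rename ι) * (mxI k σ₂).map (rename κ)

theorem fiberProduct_comm (ι : σ₁ → τ) (κ : σ₂ → τ) (I : Ideal (MvPolynomial σ₁ k))
    (J : Ideal (MvPolynomial σ₂ k)) : fiberProduct κ ι J I = fiberProduct ι κ I J := by
  rw [fiberProduct, fiberProduct, add_comm (J.map _), mul_comm]

attribute [local instance] MvPolynomial.gradedAlgebra in
theorem isHomogeneous_fiberProduct (ι : σ₁ → τ) (κ : σ₂ → τ) {I : Ideal (MvPolynomial σ₁ k)}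
    {J : Ideal (MvPolynomial σ₂ k)} (hI : I.IsHomogeneous (homogeneousSubmodule σ₁ k))
    (hJ : J.IsHomogeneous (homogeneousSubmodule σ₂ k)) :
    (fiberProduct ι κ I J).IsHomogeneous (homogeneousSubmodule τ k) :=
  ((hI.map_rename ι).sup (hJ.map_rename κ)).sup
    ((isHomogeneous_mxI.map_rename ι).mul (isHomogeneous_mxI.map_rename κ))

theorem killCompl_rename_eq_zero_of_mem_mxI {ι : σ₁ → τ} {κ : σ₂ → τ} (hι : Function.Injective ι)
    (hικ : Disjoint (Set.range ι) (Set.range κ)) {q : MvPolynomial σ₂ k} (hq : q ∈ mxI k σ₂) :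
    killCompl hι (rename κ q) = 0 := by
  have hcomp : (killCompl hι).comp (rename κ) = aeval fun _ => (0 : MvPolynomial σ₁ k) := by
    refine algHom_ext fun j => ?_
    rw [AlgHom.comp_apply, rename_X, killCompl, aeval_X, aeval_X,
      dif_neg (Set.disjoint_right.mp hικ ⟨j, rfl⟩)]
  rw [← AlgHom.comp_apply, hcomp, aeval_zero', mem_mxI_iff.mp hq, map_zero]

theorem mxI_mem_associatedPrimes_fiberProduct [Finite σ₁] [Nonempty σ₁] {ι : σ₁ → τ}
    {κ : σ₂ → τ} (hι : Function.Injective ι) (hικ : IsCompl (Set.range ι) (Set.range κ))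
    {I : Ideal (MvPolynomial σ₁ k)} {J : Ideal (MvPolynomial σ₂ k)} (hI : I ≤ mxI k σ₁ ^ 2)
    (hJ : J ≤ mxI k σ₂) (hass : mxI k σ₁ ∈ associatedPrimes _ (MvPolynomial σ₁ k ⧸ I)) :
    mxI k τ ∈ associatedPrimes _ (MvPolynomial τ k ⧸ fiberProduct ι κ I J) := by
  obtain ⟨x, hx, hmx⟩ := exists_notMem_eq_colon_of_mem_associatedPrimes hass
  have hXx : ∀ i, X i * x ∈ I := fun i => Submodule.mem_colon_singleton.mp (hmx ▸ X_mem_mxI i)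
  have hxm : x ∈ mxI k σ₁ := mem_mxI_of_X_mul_mem_sq (Classical.arbitrary σ₁) (hI (hXx _))
  have hretract : fiberProduct ι κ I J ≤ I.comap (killCompl hι) := by
    have hκ : (mxI k σ₂).map (rename κ) ≤ I.comap (killCompl hι) :=
      Ideal.map_le_iff_le_comap.mpr fun q hq => by
        simp [killCompl_rename_eq_zero_of_mem_mxI hι hικ.disjoint hq]
    refine sup_le (sup_le ?_ ((Ideal.map_mono hJ).trans hκ)) (Ideal.mul_le_right.trans hκ)
    exact Ideal.map_le_iff_le_comap.mpr fun p hp => by simpa using hp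
  refine isMaximal_mxI.mem_associatedPrimes_quotient (z := rename ι x)
    (fun hz => hx (by simpa using hretract hz)) ?_
  rw [mxI, Ideal.span_le]
  rintro _ ⟨t, rfl⟩
  rw [SetLike.mem_coe, Submodule.mem_colon_singleton, smul_eq_mul]
  have ht : t ∈ Set.range ι ⊔ Set.range κ := by
    rw [hικ.sup_eq_top]
    trivial
  obtain ⟨i, rfl⟩ | ⟨j, rfl⟩ := ht
  · rw [← rename_X ι, ← map_mul]
    exact Ideal.mem_sup_left (Ideal.mem_sup_left (Ideal.mem_map_of_mem _ (hXx i)))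
  · rw [← rename_X κ, mul_comm]
    exact Ideal.mem_sup_right (Ideal.mul_mem_mul (Ideal.mem_map_of_mem _ hxm)
      (Ideal.mem_map_of_mem _ (X_mem_mxI j)))

end FiberProduct

theorem symbPow_fiberProduct_eq_pow_of_depth_zero_general
    (k : Type*) [Field k] (a b : ℕ) (ha : 0 < a) (hb : 0 < b)
    (I : Ideal (MvPolynomial (Fin a) k)) (hIm : I ≤ mxI k (Fin a) ^ 2)
    (hIhom : IsHomogIdeal I)
    (J : Ideal (MvPolynomial (Fin b) k)) (hJn : J ≤ mxI k (Fin b) ^ 2)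
    (hJhom : IsHomogIdeal J)
    -- `min{depth(R/I), depth(S/J)} = 0`, equivalently one of the graded maximal ideals is
    -- an associated prime of the corresponding quotient
    (hdepth : mxI k (Fin a) ∈
        associatedPrimes (MvPolynomial (Fin a) k) (MvPolynomial (Fin a) k ⧸ I) ∨
      mxI k (Fin b) ∈
        associatedPrimes (MvPolynomial (Fin b) k) (MvPolynomial (Fin b) k ⧸ J))
    (I' J' m' n' : Ideal (MvPolynomial (Fin a ⊕ Fin b) k))
    (hI' : I' = Ideal.map (rename (Sum.inl : Fin a → Fin a ⊕ Fin b) :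
      MvPolynomial (Fin a) k →ₐ[k] MvPolynomial (Fin a ⊕ Fin b) k) I)
    (hJ' : J' = Ideal.map (rename (Sum.inr : Fin b → Fin a ⊕ Fin b) :
      MvPolynomial (Fin b) k →ₐ[k] MvPolynomial (Fin a ⊕ Fin b) k) J)
    (hm' : m' = Ideal.map (rename (Sum.inl : Fin a → Fin a ⊕ Fin b) :
      MvPolynomial (Fin a) k →ₐ[k] MvPolynomial (Fin a ⊕ Fin b) k) (mxI k (Fin a)))
    (hn' : n' = Ideal.map (rename (Sum.inr : Fin b → Fin a ⊕ Fin b) :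
      MvPolynomial (Fin b) k →ₐ[k] MvPolynomial (Fin a ⊕ Fin b) k) (mxI k (Fin b)))
    (F : Ideal (MvPolynomial (Fin a ⊕ Fin b) k)) (hF : F = I' + J' + m' * n')
    (s : ℕ) :
    symbPow F s = F ^ s := by
  have hFfib : F = fiberProduct Sum.inl Sum.inr I J := by rw [hF, hI', hJ', hm', hn', fiberProduct]
  subst hFfib
  have hass :
      mxI k (Fin a ⊕ Fin b) ∈ associatedPrimes _ (_ ⧸ fiberProduct Sum.inl Sum.inr I J) := by
    rcases hdepth with hI | hJ
    · have : Nonempty (Fin a) := Fin.pos_iff_nonempty.mp ha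
      exact mxI_mem_associatedPrimes_fiberProduct Sum.inl_injective Set.isCompl_range_inl_range_inr
        hIm (hJn.trans (Ideal.pow_le_self two_ne_zero)) hI
    · have : Nonempty (Fin b) := Fin.pos_iff_nonempty.mp hb
      rw [← fiberProduct_comm]
      exact mxI_mem_associatedPrimes_fiberProduct Sum.inr_injective
        Set.isCompl_range_inl_range_inr.symm hJn (hIm.trans (Ideal.pow_le_self two_ne_zero)) hJ
  have hhom : IsHomogIdeal (fiberProduct Sum.inl Sum.inr I J ^ s) :=
    isHomogIdeal_iff_isHomogeneous.mpr <| (isHomogeneous_fiberProduct _ _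
      (isHomogIdeal_iff_isHomogeneous.mp hIhom) (isHomogIdeal_iff_isHomogeneous.mp hJhom)).pow s
  exact (symbPow_le_pow_of_mem_associatedPrimes hass fun u hu _ => hhom.mem_of_mul_mem hu).antisymm
    (pow_le_symbPow _ s)

theorem symbPow_fiberProduct_eq_pow_of_depth_zero
    (k : Type*) [Field k] (a b : ℕ) (ha : 0 < a) (hb : 0 < b)
    (I : Ideal (MvPolynomial (Fin a) k)) (hIm : I ≤ mxI k (Fin a) ^ 2)
    (hIproper : I ≠ ⊤) (hIhom : IsHomogIdeal I)
    (J : Ideal (MvPolynomial (Fin b) k)) (hJn : J ≤ mxI k (Fin b) ^ 2)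
    (hJproper : J ≠ ⊤) (hJhom : IsHomogIdeal J)
    -- `min{depth(R/I), depth(S/J)} = 0`, equivalently one of the graded maximal ideals is
    -- an associated prime of the corresponding quotient
    (hdepth : mxI k (Fin a) ∈
        associatedPrimes (MvPolynomial (Fin a) k) (MvPolynomial (Fin a) k ⧸ I) ∨
      mxI k (Fin b) ∈
        associatedPrimes (MvPolynomial (Fin b) k) (MvPolynomial (Fin b) k ⧸ J))
    (I' J' m' n' : Ideal (MvPolynomial (Fin a ⊕ Fin b) k))
    (hI' : I' = Ideal.map (rename (Sum.inl : Fin a → Fin a ⊕ Fin b) :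
      MvPolynomial (Fin a) k →ₐ[k] MvPolynomial (Fin a ⊕ Fin b) k) I)
    (hJ' : J' = Ideal.map (rename (Sum.inr : Fin b → Fin a ⊕ Fin b) :
      MvPolynomial (Fin b) k →ₐ[k] MvPolynomial (Fin a ⊕ Fin b) k) J)
    (hm' : m' = Ideal.map (rename (Sum.inl : Fin a → Fin a ⊕ Fin b) :
      MvPolynomial (Fin a) k →ₐ[k] MvPolynomial (Fin a ⊕ Fin b) k) (mxI k (Fin a)))
    (hn' : n' = Ideal.map (rename (Sum.inr : Fin b → Fin a ⊕ Fin b) :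
      MvPolynomial (Fin b) k →ₐ[k] MvPolynomial (Fin a ⊕ Fin b) k) (mxI k (Fin b)))
    (F : Ideal (MvPolynomial (Fin a ⊕ Fin b) k)) (hF : F = I' + J' + m' * n')
    (s : ℕ) (hs : 1 ≤ s) :
    symbPow F s = F ^ s :=
  symbPow_fiberProduct_eq_pow_of_depth_zero_general k a b ha hb I hIm hIhom J hJn hJhom hdepth I' J'
    m' n' hI' hJ' hm' hn' F hF s
end
end

section
/- Let k be a field, let R and S be polynomial rings over k in at least one variable each, with graded maximal ideals m and n, and let T = R ⊗_k S with graded maximal ideal p = mT + nT. Let K_0 ⊇ K_1 ⊇ ⋯ and L_0 ⊇ L_1 ⊇ ⋯ be descending chains of homogeneous ideals of R and S respectively, and for s ≥ 1 set W_s = (Σ_{i=0}^{s} K_i n^{s-i}) ∩ (Σ_{t=0}^{s} L_t m^{s-t}). Assume m ⊆ K_0, n ⊆ L_0, dim(R/K_1) > 0 and dim(S/L_1) > 0. Then for every s ≥ 1 one has m^s n^s ⊄ p·W_s; in particular W_s has a minimal homogeneous generator of degree 2s. -/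
/-!
Since `dim R/K₁ > 0`, the ideal `m` is not contained in `√K₁`, so some `xⱼˢ ∉ K₁`; as `K₁` is
homogeneous, even `xⱼˢ ∉ K₁ + m^(s+1)`, and there is a `k`-linear `φ : R → k` killing
`K₁ + m^(s+1)` with `φ(xⱼˢ) ≠ 0`. Likewise `ψ : S → k` for some `yₗˢ`. Because
`m·(Σ Lₜ m^(s-t)) ⊆ m^(s+1) + L₁` and `n·(Σ Kᵢ n^(s-i)) ⊆ n^(s+1) + K₁`, the ideal `p·W_s` lies in
`(K₁ + m^(s+1))T + (L₁ + n^(s+1))T`, on which `φ ⊗ ψ` vanishes. But `xⱼˢ yₗˢ ∈ mˢnˢ ∩ W_s` and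
`(φ ⊗ ψ)(xⱼˢ yₗˢ) = φ(xⱼˢ) ψ(yₗˢ) ≠ 0`.
-/

open MvPolynomial

noncomputable section

namespace Ideal

variable {A : Type*} [CommSemiring A]

theorem apply_pow_mem_map_pow {B F : Type*} [CommSemiring B] [FunLike F A B]
    [RingHomClass F A B] (f : F) {I : Ideal A} {x : A} (hx : x ∈ I) (s : ℕ) :
    f (x ^ s) ∈ I.map f ^ s := by
  rw [map_pow]
  exact pow_mem_pow (mem_map_of_mem f hx) s

theorem mul_iSup_mul_pow_le (M : Ideal A) {L : ℕ → Ideal A} (hL : Antitone L) (s : ℕ) :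
    M * ⨆ t ∈ Finset.range (s + 1), L t * M ^ (s - t) ≤ M ^ (s + 1) ⊔ L 1 := by
  simp only [mul_iSup]
  refine iSup₂_le fun t _ => ?_
  rcases t with _ | t
  · refine le_sup_of_le_left ?_
    rw [Nat.sub_zero, mul_left_comm, ← pow_succ']
    exact mul_le_right
  · exact le_sup_of_le_right <| mul_le_right.trans <| mul_le_left.trans <| hL (Nat.le_add_left 1 t)

theorem add_mul_inf_le (M N : Ideal A) {K L : ℕ → Ideal A} (hK : Antitone K) (hL : Antitone L)
    (s : ℕ) :
    (M + N) * ((⨆ i ∈ Finset.range (s + 1), K i * N ^ (s - i)) ⊓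
        (⨆ t ∈ Finset.range (s + 1), L t * M ^ (s - t))) ≤
      (K 1 ⊔ M ^ (s + 1)) ⊔ (L 1 ⊔ N ^ (s + 1)) := by
  rw [add_mul]
  refine sup_le ?_ ?_
  · calc M * _ ≤ M * ⨆ t ∈ Finset.range (s + 1), L t * M ^ (s - t) :=
          mul_mono_right inf_le_right
      _ ≤ M ^ (s + 1) ⊔ L 1 := M.mul_iSup_mul_pow_le hL s
      _ ≤ _ := sup_le (le_sup_of_le_left le_sup_right) (le_sup_of_le_right le_sup_left)
  · calc N * _ ≤ N * ⨆ i ∈ Finset.range (s + 1), K i * N ^ (s - i) :=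
          mul_mono_right inf_le_left
      _ ≤ N ^ (s + 1) ⊔ K 1 := N.mul_iSup_mul_pow_le hK s
      _ ≤ _ := sup_le (le_sup_of_le_right le_sup_right) (le_sup_of_le_left le_sup_left)

theorem mul_mem_inf_iSup_mul_pow {M N : Ideal A} {K L : ℕ → Ideal A} {s : ℕ} {x y : A}
    (hxK : x ∈ K 0) (hxM : x ∈ M ^ s) (hyL : y ∈ L 0) (hyN : y ∈ N ^ s) :
    x * y ∈ (⨆ i ∈ Finset.range (s + 1), K i * N ^ (s - i)) ⊓
      (⨆ t ∈ Finset.range (s + 1), L t * M ^ (s - t)) :=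
  ⟨Submodule.mem_iSup_of_mem 0 <| Submodule.mem_iSup_of_mem (by simp) (mul_mem_mul hxK hyN),
    Submodule.mem_iSup_of_mem 0 <| Submodule.mem_iSup_of_mem (by simp) <|
      mul_comm x y ▸ mul_mem_mul hyL hxM⟩

end Ideal

theorem ringKrullDim_quotient_nonpos_of_le_radical {A : Type*} [CommRing A] {M I : Ideal A}
    [hM : M.IsMaximal] (hMI : M ≤ I.radical) : ringKrullDim (A ⧸ I) ≤ 0 := by
  refine Ring.krullDimLE_iff.1 (.mk₀ fun P hP => ?_)
  have hP' := hP.comap (Ideal.Quotient.mk I)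
  have hIP : I ≤ P.comap (Ideal.Quotient.mk I) :=
    Ideal.mk_ker.symm.trans_le (Ideal.ker_le_comap _)
  have hle : M ≤ P.comap (Ideal.Quotient.mk I) :=
    hMI.trans ((Ideal.radical_mono hIP).trans hP'.radical.le)
  exact Ideal.isMaximal_of_isIntegral_of_isMaximal_comap _ (hM.eq_of_le hP'.ne_top hle ▸ hM)

namespace MvPolynomial

variable {σ τ : Type*}

section CommSemiring

variable {R : Type*} [CommSemiring R]

theorem idealOfVars_eq_ker_constantCoeff : idealOfVars σ R = RingHom.ker constantCoeff := by
  ext p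
  rw [← pow_one (idealOfVars σ R), mem_pow_idealOfVars_iff', RingHom.mem_ker]
  simp [constantCoeff_eq, Finsupp.degree_eq_zero_iff]

theorem homogeneousComponent_eq_zero_of_mem_pow_idealOfVars {n : ℕ} {p : MvPolynomial σ R}
    (hp : p ∈ idealOfVars σ R ^ (n + 1)) : homogeneousComponent n p = 0 := by
  ext d
  rw [coeff_homogeneousComponent, coeff_zero]
  split_ifs with hd
  · exact (mem_pow_idealOfVars_iff' _ _).1 hp d (by omega)
  · rfl

theorem tensorEquivSum_tmul (f : MvPolynomial σ R) (g : MvPolynomial τ R) :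
    tensorEquivSum R σ τ R (f ⊗ₜ g) = rename Sum.inl f * rename Sum.inr g := by
  have hl : (tensorEquivSum R σ τ R).toAlgHom.comp Algebra.TensorProduct.includeLeft =
      rename Sum.inl := by
    ext i; simp
  have hr : (tensorEquivSum R σ τ R).toAlgHom.comp Algebra.TensorProduct.includeRight =
      rename Sum.inr := by
    ext i; simp
  rw [← hl, ← hr]
  simp [← map_mul]

def tensorFunctional (φ : MvPolynomial σ R →ₗ[R] R) (ψ : MvPolynomial τ R →ₗ[R] R) :
    MvPolynomial (σ ⊕ τ) R →ₗ[R] R :=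
  TensorProduct.lid R R ∘ₗ TensorProduct.map φ ψ ∘ₗ (tensorEquivSum R σ τ R).symm.toLinearMap

variable (φ : MvPolynomial σ R →ₗ[R] R) (ψ : MvPolynomial τ R →ₗ[R] R)

theorem tensorFunctional_rename_mul_rename (f : MvPolynomial σ R) (g : MvPolynomial τ R) :
    tensorFunctional φ ψ (rename Sum.inl f * rename Sum.inr g) = φ f * ψ g := by
  rw [tensorFunctional, ← tensorEquivSum_tmul]
  simp

theorem tensorFunctional_mul_eq_zero {x : MvPolynomial (σ ⊕ τ) R}
    (h : ∀ f g, tensorFunctional φ ψ (rename Sum.inl f * rename Sum.inr g * x) = 0)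
    (t : MvPolynomial (σ ⊕ τ) R) : tensorFunctional φ ψ (t * x) = 0 := by
  obtain ⟨z, rfl⟩ := (tensorEquivSum R σ τ R).surjective t
  induction z using TensorProduct.induction_on with
  | zero => simp
  | tmul f g => rw [tensorEquivSum_tmul]; exact h f g
  | add z z' hz hz' => rw [map_add, add_mul, map_add, hz, hz', add_zero]

theorem tensorFunctional_eq_zero_of_mem_sup {I : Ideal (MvPolynomial σ R)}
    {J : Ideal (MvPolynomial τ R)} (hφ : ∀ x ∈ I, φ x = 0) (hψ : ∀ y ∈ J, ψ y = 0)
    {z : MvPolynomial (σ ⊕ τ) R} (hz : z ∈ I.map (rename Sum.inl) ⊔ J.map (rename Sum.inr)) :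
    tensorFunctional φ ψ z = 0 := by
  suffices ∀ t, tensorFunctional φ ψ (t * z) = 0 by simpa using this 1
  rw [Ideal.map, Ideal.map, ← Ideal.span_union] at hz
  induction hz using Submodule.span_induction with
  | mem z hz =>
    refine tensorFunctional_mul_eq_zero φ ψ fun f g => ?_
    rcases hz with ⟨x, hx, rfl⟩ | ⟨y, hy, rfl⟩
    · rw [mul_right_comm, ← map_mul, tensorFunctional_rename_mul_rename,
        hφ _ (I.mul_mem_left f hx), zero_mul]
    · rw [mul_assoc, ← map_mul, tensorFunctional_rename_mul_rename,
        hψ _ (J.mul_mem_left g hy), mul_zero]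
  | zero => simp
  | add z z' _ _ hz hz' => simp [mul_add, hz, hz']
  | smul c z _ hz => intro t; rw [smul_eq_mul, ← mul_assoc]; exact hz _

theorem tensorFunctional_eq_zero_of_mem_add_mul_inf {K : ℕ → Ideal (MvPolynomial σ R)}
    {L : ℕ → Ideal (MvPolynomial τ R)} (hK : Antitone K) (hL : Antitone L) {s : ℕ}
    (hφ : ∀ x ∈ K 1 ⊔ idealOfVars σ R ^ (s + 1), φ x = 0)
    (hψ : ∀ y ∈ L 1 ⊔ idealOfVars τ R ^ (s + 1), ψ y = 0) {z : MvPolynomial (σ ⊕ τ) R}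
    (hz : z ∈ ((idealOfVars σ R).map (rename Sum.inl) + (idealOfVars τ R).map (rename Sum.inr)) *
      ((⨆ i ∈ Finset.range (s + 1),
          (K i).map (rename Sum.inl) * (idealOfVars τ R).map (rename Sum.inr) ^ (s - i)) ⊓
        (⨆ t ∈ Finset.range (s + 1),
          (L t).map (rename Sum.inr) * (idealOfVars σ R).map (rename Sum.inl) ^ (s - t)))) :
    tensorFunctional φ ψ z = 0 := by
  refine tensorFunctional_eq_zero_of_mem_sup φ ψ hφ hψ ?_
  rw [Ideal.map_sup, Ideal.map_sup, Ideal.map_pow, Ideal.map_pow]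
  exact Ideal.add_mul_inf_le _ _ (fun _ _ h => Ideal.map_mono (hK h))
    (fun _ _ h => Ideal.map_mono (hL h)) s hz

end CommSemiring

variable {k : Type*} [Field k]

instance isMaximal_idealOfVars : (idealOfVars σ k).IsMaximal := by
  rw [idealOfVars_eq_ker_constantCoeff]
  exact RingHom.ker_isMaximal_of_surjective _ fun c => ⟨C c, constantCoeff_C σ c⟩

theorem exists_X_pow_notMem_of_ringKrullDim_pos (I : Ideal (MvPolynomial σ k)) (s : ℕ)
    (hI : 0 < ringKrullDim (MvPolynomial σ k ⧸ I)) : ∃ j, X j ^ s ∉ I := by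
  by_contra! h
  have hle : idealOfVars σ k ≤ I.radical :=
    Ideal.span_le.2 <| Set.range_subset_iff.2 fun j => ⟨s, h j⟩
  exact (ringKrullDim_quotient_nonpos_of_le_radical hle).not_gt hI

theorem notMem_sup_pow_idealOfVars {I : Ideal (MvPolynomial σ k)} (hI : IsHomogIdeal I)
    {f : MvPolynomial σ k} {s : ℕ} (hf : f.IsHomogeneous s) (hfI : f ∉ I) :
    f ∉ I ⊔ idealOfVars σ k ^ (s + 1) := by
  intro hmem
  obtain ⟨u, hu, v, hv, rfl⟩ := Submodule.mem_sup.1 hmem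
  refine hfI ?_
  rw [← homogeneousComponent_eq_self hf, map_add,
    homogeneousComponent_eq_zero_of_mem_pow_idealOfVars hv, add_zero] at *
  exact hI u hu s

theorem exists_linearMap_X_pow_ne_zero_of_ringKrullDim_pos {I : Ideal (MvPolynomial σ k)}
    (hI : IsHomogIdeal I) (s : ℕ) (hdim : 0 < ringKrullDim (MvPolynomial σ k ⧸ I)) :
    ∃ j, ∃ φ : MvPolynomial σ k →ₗ[k] k,
      (∀ x ∈ I ⊔ idealOfVars σ k ^ (s + 1), φ x = 0) ∧ φ (X j ^ s) ≠ 0 := by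
  obtain ⟨j, hj⟩ := exists_X_pow_notMem_of_ringKrullDim_pos I s hdim
  obtain ⟨φ, hφj, hφ⟩ := Submodule.exists_dual_map_eq_bot_of_notMem
    (p := (I ⊔ idealOfVars σ k ^ (s + 1)).restrictScalars k)
    (notMem_sup_pow_idealOfVars hI (isHomogeneous_X_pow j s) hj) inferInstance
  exact ⟨j, φ, fun x hx => (Submodule.eq_bot_iff _).1 hφ _ (Submodule.mem_map_of_mem hx), hφj⟩

end MvPolynomial

theorem filtration_intersection_has_generator_of_degree_two_s_general
    (k : Type*) [Field k] (a b : ℕ)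
    (K : ℕ → Ideal (MvPolynomial (Fin a) k)) (hKdesc : ∀ i : ℕ, K (i + 1) ≤ K i)
    (hKhom : ∀ i : ℕ, IsHomogIdeal (K i))
    (L : ℕ → Ideal (MvPolynomial (Fin b) k)) (hLdesc : ∀ t : ℕ, L (t + 1) ≤ L t)
    (hLhom : ∀ t : ℕ, IsHomogIdeal (L t))
    (hK0 : mxI k (Fin a) ≤ K 0) (hL0 : mxI k (Fin b) ≤ L 0)
    (hK1 : 0 < ringKrullDim (MvPolynomial (Fin a) k ⧸ K 1))
    (hL1 : 0 < ringKrullDim (MvPolynomial (Fin b) k ⧸ L 1))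
    (m' n' : Ideal (MvPolynomial (Fin a ⊕ Fin b) k))
    (hm' : m' = Ideal.map (rename (Sum.inl : Fin a → Fin a ⊕ Fin b) :
      MvPolynomial (Fin a) k →ₐ[k] MvPolynomial (Fin a ⊕ Fin b) k) (mxI k (Fin a)))
    (hn' : n' = Ideal.map (rename (Sum.inr : Fin b → Fin a ⊕ Fin b) :
      MvPolynomial (Fin b) k →ₐ[k] MvPolynomial (Fin a ⊕ Fin b) k) (mxI k (Fin b)))
    -- the extensions of the filtrations to `T`
    (K' : ℕ → Ideal (MvPolynomial (Fin a ⊕ Fin b) k))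
    (hK' : ∀ i : ℕ, K' i = Ideal.map (rename (Sum.inl : Fin a → Fin a ⊕ Fin b) :
      MvPolynomial (Fin a) k →ₐ[k] MvPolynomial (Fin a ⊕ Fin b) k) (K i))
    (L' : ℕ → Ideal (MvPolynomial (Fin a ⊕ Fin b) k))
    (hL' : ∀ t : ℕ, L' t = Ideal.map (rename (Sum.inr : Fin b → Fin a ⊕ Fin b) :
      MvPolynomial (Fin b) k →ₐ[k] MvPolynomial (Fin a ⊕ Fin b) k) (L t))
    (s : ℕ) (hs : 1 ≤ s)
    (W : Ideal (MvPolynomial (Fin a ⊕ Fin b) k))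
    (hW : W = (⨆ i ∈ Finset.range (s + 1), K' i * n' ^ (s - i)) ⊓
        (⨆ t ∈ Finset.range (s + 1), L' t * m' ^ (s - t))) :
    ¬ (m' ^ s * n' ^ s ≤ (m' + n') * W) ∧
      ∃ f ∈ W, MvPolynomial.IsHomogeneous f (2 * s) ∧ f ∉ (m' + n') * W := by
  obtain ⟨j, φ, hφ, hφj⟩ := exists_linearMap_X_pow_ne_zero_of_ringKrullDim_pos (hKhom 1) s hK1
  obtain ⟨l, ψ, hψ, hψl⟩ := exists_linearMap_X_pow_ne_zero_of_ringKrullDim_pos (hLhom 1) s hL1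
  have hxm : rename Sum.inl (X j ^ s) ∈ m' ^ s :=
    hm' ▸ Ideal.apply_pow_mem_map_pow _ (Ideal.subset_span (Set.mem_range_self j)) s
  have hyn : rename Sum.inr (X l ^ s) ∈ n' ^ s :=
    hn' ▸ Ideal.apply_pow_mem_map_pow _ (Ideal.subset_span (Set.mem_range_self l)) s
  have hxK : rename Sum.inl (X j ^ s) ∈ K' 0 := hK' 0 ▸ Ideal.pow_le_self (by omega)
    (Ideal.apply_pow_mem_map_pow _ (hK0 (Ideal.subset_span (Set.mem_range_self j))) s)
  have hyL : rename Sum.inr (X l ^ s) ∈ L' 0 := hL' 0 ▸ Ideal.pow_le_self (by omega)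
    (Ideal.apply_pow_mem_map_pow _ (hL0 (Ideal.subset_span (Set.mem_range_self l))) s)
  have hxyW := hW ▸ Ideal.mul_mem_inf_iSup_mul_pow hxK hxm hyL hyn
  obtain rfl : K' = fun i => (K i).map (rename Sum.inl) := funext hK'
  obtain rfl : L' = fun t => (L t).map (rename Sum.inr) := funext hL'
  subst hm' hn' hW
  have hxy : rename Sum.inl (X j ^ s) * rename Sum.inr (X l ^ s) ∉ _ := fun h =>
    mul_ne_zero hφj hψl <| tensorFunctional_rename_mul_rename φ ψ (X j ^ s) (X l ^ s) ▸
      tensorFunctional_eq_zero_of_mem_add_mul_inf φ ψ (antitone_nat_of_succ_le hKdesc)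
        (antitone_nat_of_succ_le hLdesc) hφ hψ h
  refine ⟨fun h => hxy (h (Ideal.mul_mem_mul hxm hyn)), _, hxyW, ?_, hxy⟩
  rw [two_mul]
  exact (isHomogeneous_X_pow j s).rename_isHomogeneous.mul
    (isHomogeneous_X_pow l s).rename_isHomogeneous

theorem filtration_intersection_has_generator_of_degree_two_s
    (k : Type*) [Field k] (a b : ℕ) (ha : 0 < a) (hb : 0 < b)
    (K : ℕ → Ideal (MvPolynomial (Fin a) k)) (hKdesc : ∀ i : ℕ, K (i + 1) ≤ K i)
    (hKhom : ∀ i : ℕ, IsHomogIdeal (K i))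
    (L : ℕ → Ideal (MvPolynomial (Fin b) k)) (hLdesc : ∀ t : ℕ, L (t + 1) ≤ L t)
    (hLhom : ∀ t : ℕ, IsHomogIdeal (L t))
    (hK0 : mxI k (Fin a) ≤ K 0) (hL0 : mxI k (Fin b) ≤ L 0)
    (hK1 : 0 < ringKrullDim (MvPolynomial (Fin a) k ⧸ K 1))
    (hL1 : 0 < ringKrullDim (MvPolynomial (Fin b) k ⧸ L 1))
    (m' n' : Ideal (MvPolynomial (Fin a ⊕ Fin b) k))
    (hm' : m' = Ideal.map (rename (Sum.inl : Fin a → Fin a ⊕ Fin b) :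
      MvPolynomial (Fin a) k →ₐ[k] MvPolynomial (Fin a ⊕ Fin b) k) (mxI k (Fin a)))
    (hn' : n' = Ideal.map (rename (Sum.inr : Fin b → Fin a ⊕ Fin b) :
      MvPolynomial (Fin b) k →ₐ[k] MvPolynomial (Fin a ⊕ Fin b) k) (mxI k (Fin b)))
    -- the extensions of the filtrations to `T`
    (K' : ℕ → Ideal (MvPolynomial (Fin a ⊕ Fin b) k))
    (hK' : ∀ i : ℕ, K' i = Ideal.map (rename (Sum.inl : Fin a → Fin a ⊕ Fin b) :
      MvPolynomial (Fin a) k →ₐ[k] MvPolynomial (Fin a ⊕ Fin b) k) (K i))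
    (L' : ℕ → Ideal (MvPolynomial (Fin a ⊕ Fin b) k))
    (hL' : ∀ t : ℕ, L' t = Ideal.map (rename (Sum.inr : Fin b → Fin a ⊕ Fin b) :
      MvPolynomial (Fin b) k →ₐ[k] MvPolynomial (Fin a ⊕ Fin b) k) (L t))
    (s : ℕ) (hs : 1 ≤ s)
    (W : Ideal (MvPolynomial (Fin a ⊕ Fin b) k))
    (hW : W = (⨆ i ∈ Finset.range (s + 1), K' i * n' ^ (s - i)) ⊓
        (⨆ t ∈ Finset.range (s + 1), L' t * m' ^ (s - t))) :
    ¬ (m' ^ s * n' ^ s ≤ (m' + n') * W) ∧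
      ∃ f ∈ W, MvPolynomial.IsHomogeneous f (2 * s) ∧ f ∉ (m' + n') * W :=
  filtration_intersection_has_generator_of_degree_two_s_general k a b K hKdesc hKhom L hLdesc hLhom
    hK0 hL0 hK1 hL1 m' n' hm' hn' K' hK' L' hL' s hs W hW

end
end

section
/- Let k be a field, let R and S be polynomial rings over k in at least one variable each, with graded maximal ideals m and n, let I ⊆ m² and J ⊆ n² be proper homogeneous ideals, let T = R ⊗_k S, and let F = I + J + mn ⊆ T. Let s ≥ 2 and 1 ≤ i ≤ s−1 be integers. Then: (1) (I^i ∩ m^s)·n^{s−i} ∩ F^s ⊆ (mn)^{s−i}·F^i as ideals of T, and the contraction to R of the colon ideal (F^s :_T n^{s−i}) intersected with I^i ∩ m^s equals m^{s−i}I^i, i.e., {x ∈ I^i ∩ m^s : x·n^{s−i} ⊆ F^s} = m^{s−i}I^i; (2) if moreover I ≠ (0), then I^i m^{s−i−1} n^{s−i} ⊄ F^s. -/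
/- STATEMENT 17: k a field, R and S polynomial rings over k in at least one variable each
with graded maximal ideals m and n, I ⊆ m² and J ⊆ n² proper homogeneous ideals,
T = R ⊗_k S, F = I + J + mn, s ≥ 2, 1 ≤ i ≤ s−1. Then:
(1) (I^i ∩ m^s)·n^{s−i} ∩ F^s ⊆ (mn)^{s−i}·F^i in T, and
    {x ∈ I^i ∩ m^s : x·n^{s−i} ⊆ F^s} = m^{s−i}I^i as ideals of R;
(2) if I ≠ (0) then I^i m^{s−i−1} n^{s−i} ⊄ F^s. -/

open MvPolynomial

noncomputable section

/-!
Identify `k[x ⊕ y]` with `A[y]`, `A = k[x]`: then `F = I + 𝕁 + m N` with `N` the ideal of the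
`y`-variables and `𝕁 ⊆ N ^ 2`. In the expansion `F ^ s = ∑_{p+q+r=s} I^p 𝕁^q (m N)^r` the
summand `(p, q, r)` starts in `y`-degree `2 q + r` and has coefficients in `I ^ p m ^ r`, so a
`y`-coefficient of degree `d` of an element of `F ^ s` lies in `∑_{2q+r ≤ d} I^p m^r`. Using
`I ⊆ m ^ 2`, this sum lies in `I ^ i m ^ (s - i)` for `d = s - i`, which gives the colon ideal (test
with `y₀ ^ (s - i)`) and, by degree comparison with a nonzero homogeneous element of least degree
of `I`, the non-containment. For the first inclusion, every term of the sum for `s - i ≤ d < s`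
lies in some `I ^ j m ^ (s - j)` with `j ≤ i` and `s - j ≤ d`, and `I^j m^(s-j) N^(s-j)` is
contained in `(m N)^(s-i) F^i`.
-/

namespace FiberProduct

section Ideals

variable {R : Type*} [CommSemiring R] {I J M N : Ideal R} {i j s : ℕ}

lemma pow_mul_pow_le (hI : I ≤ M ^ 2) {p r e : ℕ} (hj : j ≤ p) (he : e ≤ 2 * (p - j) + r) :
    I ^ p * M ^ r ≤ I ^ j * M ^ e :=
  calc I ^ p * M ^ r = I ^ j * (I ^ (p - j) * M ^ r) := by
        rw [← mul_assoc, ← pow_add, Nat.add_sub_cancel' hj]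
    _ ≤ I ^ j * ((M ^ 2) ^ (p - j) * M ^ r) := by gcongr
    _ = I ^ j * M ^ (2 * (p - j) + r) := by rw [← pow_mul, pow_add]
    _ ≤ I ^ j * M ^ e := Ideal.mul_mono_right (Ideal.pow_le_pow_right he)

lemma pow_mul_mul_pow_le (hj : j ≤ i) (hi : i ≤ s) :
    I ^ j * (M * N) ^ (s - j) ≤ (M * N) ^ (s - i) * (I + J + M * N) ^ i :=
  calc I ^ j * (M * N) ^ (s - j) = (M * N) ^ (s - i) * ((M * N) ^ (i - j) * I ^ j) := by
        rw [show s - j = s - i + (i - j) by omega, pow_add]; ring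
    _ ≤ (M * N) ^ (s - i) * ((I + J + M * N) ^ (i - j) * (I + J + M * N) ^ j) := by
        gcongr
        exacts [le_sup_right, le_sup_left.trans le_sup_left]
    _ = (M * N) ^ (s - i) * (I + J + M * N) ^ i := by rw [← pow_add, Nat.sub_add_cancel hj]

lemma pow_mul_pow_mul_pow_le (hi : i ≤ s) :
    M ^ (s - i) * I ^ i * N ^ (s - i) ≤ (I + J + M * N) ^ s :=
  calc M ^ (s - i) * I ^ i * N ^ (s - i) = (M * N) ^ (s - i) * I ^ i := by rw [mul_pow]; ring
    _ ≤ (I + J + M * N) ^ (s - i) * (I + J + M * N) ^ i := by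
        gcongr
        exacts [le_sup_right, le_sup_left.trans le_sup_left]
    _ = (I + J + M * N) ^ s := by rw [← pow_add, Nat.sub_add_cancel hi]

end Ideals

variable {A : Type*} [CommRing A] {τ : Type*}

section CoeffIdeal

variable (I M : Ideal A)

/-- The bound `∑_{p+q+r=s, 2q+r ≤ d} I^p M^r` for the coefficients of degree `d` of elements of
`(I + 𝕁 + M N) ^ s` in `A[τ]`, where `N` is the ideal of the variables and `𝕁 ≤ N ^ 2`. -/
def coeffIdeal (s d : ℕ) : Ideal A :=
  ⨆ (p) (q) (r) (_ : p + q + r = s) (_ : 2 * q + r ≤ d), I ^ p * M ^ r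

variable {I M} {s d : ℕ}

lemma le_coeffIdeal {p q r : ℕ} (hs : p + q + r = s) (hd : 2 * q + r ≤ d) :
    I ^ p * M ^ r ≤ coeffIdeal I M s d :=
  le_iSup_of_le p <| le_iSup_of_le q <| le_iSup_of_le r <| le_iSup_of_le hs <|
    le_iSup_of_le hd le_rfl

lemma coeffIdeal_le {K : Ideal A}
    (h : ∀ p q r, p + q + r = s → 2 * q + r ≤ d → I ^ p * M ^ r ≤ K) :
    coeffIdeal I M s d ≤ K := by
  simpa only [coeffIdeal, iSup_le_iff] using h

lemma coeffIdeal_mono {d' : ℕ} (h : d ≤ d') : coeffIdeal I M s d ≤ coeffIdeal I M s d' :=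
  coeffIdeal_le fun _ _ _ hs hd => le_coeffIdeal hs (hd.trans h)

lemma coeffIdeal_zero : coeffIdeal I M 0 d = ⊤ := by
  simpa using le_coeffIdeal (I := I) (M := M) (s := 0) (d := d) (q := 0) (r := 0) rfl d.zero_le

lemma coeffIdeal_mul_le_succ : coeffIdeal I M s d * I ≤ coeffIdeal I M (s + 1) d := by
  simp only [coeffIdeal, Submodule.iSup_mul, iSup_le_iff]
  intro p q r hs hd
  rw [mul_right_comm, ← pow_succ]
  exact le_coeffIdeal (by omega) hd

lemma coeffIdeal_le_succ_add_two : coeffIdeal I M s d ≤ coeffIdeal I M (s + 1) (d + 2) :=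
  coeffIdeal_le fun p q r hs hd => le_coeffIdeal (p := p) (q := q + 1) (by omega) (by omega)

lemma coeffIdeal_mul_le_succ_add_one :
    coeffIdeal I M s d * M ≤ coeffIdeal I M (s + 1) (d + 1) := by
  simp only [coeffIdeal, Submodule.iSup_mul, iSup_le_iff]
  intro p q r hs hd
  rw [mul_assoc, ← pow_succ]
  exact le_coeffIdeal (q := q) (by omega) (by omega)

lemma coeffIdeal_le_pow_mul (hI : I ≤ M ^ 2) {i : ℕ} (hi : i ≤ s) :
    coeffIdeal I M s (s - i) ≤ I ^ i * M ^ (s - i) :=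
  coeffIdeal_le fun _ _ _ hs hd => pow_mul_pow_le hI (by omega) (by omega)

end CoeffIdeal

section Iterated

variable (I M : Ideal A) (𝕁 : Ideal (MvPolynomial τ A))

def idealIter : Ideal (MvPolynomial τ A) :=
  I.map C + 𝕁 + M.map C * idealOfVars τ A

variable {I M 𝕁} {s d : ℕ}

lemma mul_coeff_mem_coeffIdeal (h𝕁 : 𝕁 ≤ idealOfVars τ A ^ 2) {c : A}
    (hc : c ∈ coeffIdeal I M s d) {v : MvPolynomial τ A} (hv : v ∈ idealIter I M 𝕁)
    (δ : τ →₀ ℕ) : c * coeff δ v ∈ coeffIdeal I M (s + 1) (d + δ.degree) := by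
  obtain ⟨v', hv', v₃, hv₃, rfl⟩ := Submodule.mem_sup.1 hv
  obtain ⟨v₁, hv₁, v₂, hv₂, rfl⟩ := Submodule.mem_sup.1 hv'
  rw [coeff_add, coeff_add, mul_add, mul_add]
  refine add_mem (add_mem ?_ ?_) ?_
  · exact coeffIdeal_mono (by omega)
      (coeffIdeal_mul_le_succ (Ideal.mul_mem_mul hc (mem_map_C_iff.1 hv₁ δ)))
  · rcases lt_or_ge δ.degree 2 with hδ | hδ
    · rw [(mem_pow_idealOfVars_iff' 2 v₂).1 (h𝕁 hv₂) δ hδ, mul_zero]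
      exact zero_mem _
    · exact Ideal.mul_mem_right _ _
        (coeffIdeal_mono (by omega) (coeffIdeal_le_succ_add_two hc))
  · rcases Nat.eq_zero_or_pos δ.degree with hδ | hδ
    · have hv₃N : v₃ ∈ idealOfVars τ A ^ 1 := by simpa using Ideal.mul_le_right hv₃
      rw [(mem_pow_idealOfVars_iff' 1 v₃).1 hv₃N δ (by omega), mul_zero]
      exact zero_mem _
    · exact coeffIdeal_mono (by omega) (coeffIdeal_mul_le_succ_add_one
        (Ideal.mul_mem_mul hc (mem_map_C_iff.1 (Ideal.mul_le_left hv₃) δ)))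

theorem coeff_mem_coeffIdeal (h𝕁 : 𝕁 ≤ idealOfVars τ A ^ 2) {w : MvPolynomial τ A}
    (hw : w ∈ idealIter I M 𝕁 ^ s) (β : τ →₀ ℕ) : coeff β w ∈ coeffIdeal I M s β.degree := by
  classical
  induction s generalizing w β with
  | zero => simp [coeffIdeal_zero]
  | succ s ih =>
    rw [pow_succ] at hw
    revert β
    refine Submodule.mul_induction_on hw (fun u hu v hv β => ?_) (fun u v hu hv β => ?_)
    · rw [coeff_mul]
      refine sum_mem fun x hx => ?_
      rw [← Finset.HasAntidiagonal.mem_antidiagonal.1 hx, map_add]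
      exact mul_coeff_mem_coeffIdeal h𝕁 (ih hu x.1) hv x.2
    · rw [coeff_add]
      exact add_mem (hu β) (hv β)

theorem mem_pow_mul_of_C_mul_X_pow_mem (hI : I ≤ M ^ 2) (h𝕁 : 𝕁 ≤ idealOfVars τ A ^ 2)
    {i : ℕ} (hi : i ≤ s) {x : A} (j : τ) (h : C x * X j ^ (s - i) ∈ idealIter I M 𝕁 ^ s) :
    x ∈ I ^ i * M ^ (s - i) := by
  classical
  have hx := coeff_mem_coeffIdeal h𝕁 h (Finsupp.single j (s - i))
  simp only [X_pow_eq_monomial, C_mul_monomial, mul_one, coeff_monomial, if_pos,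
    Finsupp.degree_single] at hx
  exact coeffIdeal_le_pow_mul hI hi hx

lemma map_C_inf (K L : Ideal A) :
    (K ⊓ L).map (C : A →+* MvPolynomial τ A) = K.map C ⊓ L.map C := by
  ext f
  simp only [Ideal.mem_inf, mem_map_C_iff, forall_and]

lemma monomial_mem_map_C_mul_pow {K : Ideal A} {c : A} (hc : c ∈ K) (β : τ →₀ ℕ) :
    monomial β c ∈ K.map C * idealOfVars τ A ^ β.degree := by
  rw [← mul_one c, ← C_mul_monomial]
  refine Ideal.mul_mem_mul (Ideal.mem_map_of_mem _ hc)
    ((mem_pow_idealOfVars_iff _ _).2 fun x hx => ?_)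
  rw [Finset.mem_singleton.1 (support_monomial_subset hx)]

lemma map_C_pow_mul_pow_mul_le {i j : ℕ} (hj : j ≤ i) (hi : i ≤ s) (hd : s - j ≤ d) :
    (I ^ j * M ^ (s - j)).map C * idealOfVars τ A ^ d ≤
      (M.map C * idealOfVars τ A) ^ (s - i) * idealIter I M 𝕁 ^ i :=
  calc (I ^ j * M ^ (s - j)).map C * idealOfVars τ A ^ d
      ≤ (I.map C) ^ j * (M.map C * idealOfVars τ A) ^ (s - j) := by
        rw [Ideal.map_mul, Ideal.map_pow, Ideal.map_pow, mul_pow, mul_assoc]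
        exact Ideal.mul_mono_right (Ideal.mul_mono_right (Ideal.pow_le_pow_right hd))
    _ ≤ _ := pow_mul_mul_pow_le hj hi

lemma map_C_coeffIdeal_mul_le (hI : I ≤ M ^ 2) {i : ℕ} (hi : i ≤ s) (hd : s - i ≤ d)
    (hds : d < s) :
    (coeffIdeal I M s d).map C * idealOfVars τ A ^ d ≤
      (M.map C * idealOfVars τ A) ^ (s - i) * idealIter I M 𝕁 ^ i := by
  simp only [coeffIdeal, Ideal.map_iSup, Submodule.iSup_mul, iSup_le_iff]
  intro p q r hs hqr
  -- `j = min i (p - q)` works: `2 q + r ≤ d < p + q + r` forces `q < p`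
  calc (I ^ p * M ^ r).map C * idealOfVars τ A ^ d
      ≤ (I ^ min i (p - q) * M ^ (s - min i (p - q))).map C * idealOfVars τ A ^ d :=
        Ideal.mul_mono_left (Ideal.map_mono (pow_mul_pow_le hI (by omega) (by omega)))
    _ ≤ _ := map_C_pow_mul_pow_mul_le (min_le_left _ _) hi (by omega)

theorem map_C_inf_mul_pow_inf_pow_le (hI : I ≤ M ^ 2) (h𝕁 : 𝕁 ≤ idealOfVars τ A ^ 2)
    {i : ℕ} (hi : i ≤ s) :
    (I.map C ^ i ⊓ M.map C ^ s) * idealOfVars τ A ^ (s - i) ⊓ idealIter I M 𝕁 ^ s ≤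
      (M.map C * idealOfVars τ A) ^ (s - i) * idealIter I M 𝕁 ^ i := by
  rintro w ⟨hw, hwF⟩
  rw [← support_sum_monomial_coeff w]
  refine sum_mem fun β hβ => ?_
  rw [← Ideal.map_pow, ← Ideal.map_pow, ← map_C_inf] at hw
  have hc : coeff β w ∈ I ^ i ⊓ M ^ s := mem_map_C_iff.1 (Ideal.mul_le_left hw) β
  have hd : s - i ≤ β.degree := (mem_pow_idealOfVars_iff _ _).1 (Ideal.mul_le_right hw) β hβ
  rcases le_or_gt s β.degree with hs | hs
  · refine map_C_pow_mul_pow_mul_le (j := 0) (Nat.zero_le i) hi (by omega) ?_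
    simpa using monomial_mem_map_C_mul_pow hc.2 β
  · exact map_C_coeffIdeal_mul_le hI hi hd hs
      (monomial_mem_map_C_mul_pow (coeff_mem_coeffIdeal h𝕁 hwF β) β)

end Iterated

section Transfer

lemma _root_.Ideal.le_of_map_le_map_of_bijective {R S F : Type*} [Semiring R] [Semiring S]
    [FunLike F R S] [RingHomClass F R S] {f : F} (hf : Function.Bijective f) {P Q : Ideal R}
    (h : P.map f ≤ Q.map f) : P ≤ Q := by
  simpa only [Ideal.comap_map_of_bijective f hf] using Ideal.comap_mono (f := f) h

lemma _root_.Ideal.map_inf_of_bijective {R S F : Type*} [Semiring R] [Semiring S]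
    [FunLike F R S] [RingHomClass F R S] {f : F} (hf : Function.Bijective f) (P Q : Ideal R) :
    (P ⊓ Q).map f = P.map f ⊓ Q.map f := by
  conv_rhs => rw [← Ideal.map_comap_of_surjective f hf.2 (P.map f ⊓ Q.map f), Ideal.comap_inf,
    Ideal.comap_map_of_bijective f hf, Ideal.comap_map_of_bijective f hf]

variable {R : Type*} [CommRing R] {σ τ : Type*}

lemma X_mem_map_rename_idealOfVars {υ : Type*} (f : σ → υ) (j : σ) :
    (X (f j) : MvPolynomial υ R) ∈ (idealOfVars σ R).map (rename f) := by
  rw [← rename_X]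
  exact Ideal.mem_map_of_mem _ (Ideal.subset_span (Set.mem_range_self j))

lemma map_idealOfVars {S : Type*} [CommRing S] (f : R →+* S) :
    (idealOfVars τ R).map (map f) = idealOfVars τ S := by
  rw [Ideal.map_span, ← Set.range_comp]
  exact congrArg (Ideal.span ∘ Set.range) (funext fun j => map_X f j)

lemma map_map_le_idealOfVars_pow {S : Type*} [CommRing S] (f : R →+* S)
    {K : Ideal (MvPolynomial τ R)} {n : ℕ} (hK : K ≤ idealOfVars τ R ^ n) :
    K.map (map f) ≤ idealOfVars τ S ^ n :=
  (Ideal.map_mono hK).trans_eq (by rw [Ideal.map_pow, map_idealOfVars])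

variable (R σ τ) in
def sumAlgEquivSwap : MvPolynomial (σ ⊕ τ) R ≃ₐ[R] MvPolynomial τ (MvPolynomial σ R) :=
  (renameEquiv R (Equiv.sumComm σ τ)).trans (sumAlgEquiv R τ σ)

@[simp]
lemma sumAlgEquivSwap_rename_inl (f : MvPolynomial σ R) :
    sumAlgEquivSwap R σ τ (rename Sum.inl f) = C f := by
  simp only [sumAlgEquivSwap, AlgEquiv.trans_apply, renameEquiv_apply, rename_rename]
  exact DFunLike.congr_fun (sumAlgEquiv_comp_rename_inr R τ σ) f

@[simp]
lemma sumAlgEquivSwap_rename_inr (g : MvPolynomial τ R) :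
    sumAlgEquivSwap R σ τ (rename Sum.inr g) = map (algebraMap R (MvPolynomial σ R)) g := by
  simp only [sumAlgEquivSwap, AlgEquiv.trans_apply, renameEquiv_apply, rename_rename]
  exact DFunLike.congr_fun (sumAlgEquiv_comp_rename_inl R τ σ) g

@[simp]
lemma sumAlgEquivSwap_X_inr (j : τ) : sumAlgEquivSwap R σ τ (X (Sum.inr j)) = X j := by
  rw [← rename_X Sum.inr, sumAlgEquivSwap_rename_inr, map_X]

lemma map_sumAlgEquivSwap_map_rename_inl (K : Ideal (MvPolynomial σ R)) :
    (K.map (rename Sum.inl)).map (sumAlgEquivSwap R σ τ) = K.map C := by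
  rw [← Ideal.map_coe (rename Sum.inl), ← Ideal.map_coe (sumAlgEquivSwap R σ τ), Ideal.map_map]
  exact congrArg (Ideal.map · K) (RingHom.ext sumAlgEquivSwap_rename_inl)

lemma map_sumAlgEquivSwap_map_rename_inr (K : Ideal (MvPolynomial τ R)) :
    (K.map (rename Sum.inr)).map (sumAlgEquivSwap R σ τ) =
      K.map (map (algebraMap R (MvPolynomial σ R))) := by
  rw [← Ideal.map_coe (rename Sum.inr), ← Ideal.map_coe (sumAlgEquivSwap R σ τ), Ideal.map_map]
  exact congrArg (Ideal.map · K) (RingHom.ext sumAlgEquivSwap_rename_inr)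

variable (I : Ideal (MvPolynomial σ R)) (J : Ideal (MvPolynomial τ R))

def ideal : Ideal (MvPolynomial (σ ⊕ τ) R) :=
  I.map (rename Sum.inl) + J.map (rename Sum.inr) +
    (idealOfVars σ R).map (rename Sum.inl) * (idealOfVars τ R).map (rename Sum.inr)

lemma map_sumAlgEquivSwap_ideal : (ideal I J).map (sumAlgEquivSwap R σ τ) =
    idealIter I (idealOfVars σ R) (J.map (map (algebraMap R (MvPolynomial σ R)))) := by
  simp only [ideal, idealIter, Submodule.add_eq_sup, Ideal.map_sup, Ideal.map_mul,
    map_sumAlgEquivSwap_map_rename_inl, map_sumAlgEquivSwap_map_rename_inr, map_idealOfVars]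

variable {I J} {i s : ℕ}

theorem inf_mul_pow_inf_pow_le (hI : I ≤ idealOfVars σ R ^ 2) (hJ : J ≤ idealOfVars τ R ^ 2)
    (hi : i ≤ s) :
    (I.map (rename Sum.inl) ^ i ⊓ (idealOfVars σ R).map (rename Sum.inl) ^ s) *
        (idealOfVars τ R).map (rename Sum.inr) ^ (s - i) ⊓ ideal I J ^ s ≤
      ((idealOfVars σ R).map (rename Sum.inl) * (idealOfVars τ R).map (rename Sum.inr)) ^
        (s - i) * ideal I J ^ i := by
  have he := (sumAlgEquivSwap R σ τ).bijective
  refine Ideal.le_of_map_le_map_of_bijective he ?_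
  simp only [Ideal.map_inf_of_bijective he, Ideal.map_mul, Ideal.map_pow,
    map_sumAlgEquivSwap_ideal, map_sumAlgEquivSwap_map_rename_inl,
    map_sumAlgEquivSwap_map_rename_inr, map_idealOfVars]
  exact map_C_inf_mul_pow_inf_pow_le hI (map_map_le_idealOfVars_pow _ hJ) hi

theorem mem_pow_mul_of_rename_mul_X_pow_mem (hI : I ≤ idealOfVars σ R ^ 2)
    (hJ : J ≤ idealOfVars τ R ^ 2) (hi : i ≤ s) {x : MvPolynomial σ R} (j : τ)
    (h : rename Sum.inl x * X (Sum.inr j) ^ (s - i) ∈ ideal I J ^ s) :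
    x ∈ I ^ i * idealOfVars σ R ^ (s - i) := by
  have h' := Ideal.mem_map_of_mem (sumAlgEquivSwap R σ τ) h
  rw [Ideal.map_pow, map_sumAlgEquivSwap_ideal, map_mul, map_pow, sumAlgEquivSwap_rename_inl,
    sumAlgEquivSwap_X_inr] at h'
  exact mem_pow_mul_of_C_mul_X_pow_mem hI (map_map_le_idealOfVars_pow _ hJ) hi j h'

theorem comap_colon_inf_eq [Nonempty τ] (hI : I ≤ idealOfVars σ R ^ 2)
    (hJ : J ≤ idealOfVars τ R ^ 2) (hi : i ≤ s) :
    Ideal.comap (rename Sum.inl : MvPolynomial σ R →ₐ[R] MvPolynomial (σ ⊕ τ) R)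
        (Submodule.colon (ideal I J ^ s)
          (((idealOfVars τ R).map (rename Sum.inr) ^ (s - i) :
            Ideal (MvPolynomial (σ ⊕ τ) R)) : Set (MvPolynomial (σ ⊕ τ) R))) ⊓
        (I ^ i ⊓ idealOfVars σ R ^ s) =
      idealOfVars σ R ^ (s - i) * I ^ i := by
  refine le_antisymm (fun x hx => ?_) fun x hx => ⟨?_, Ideal.mul_le_right hx, ?_⟩
  · obtain ⟨j⟩ := ‹Nonempty τ›
    have hy := Ideal.pow_mem_pow
      (X_mem_map_rename_idealOfVars (R := R) (Sum.inr : τ → σ ⊕ τ) j) (s - i)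
    rw [mul_comm]
    exact mem_pow_mul_of_rename_mul_X_pow_mem hI hJ hi j
      (Submodule.mem_colon.1 (Ideal.mem_comap.1 hx.1) _ hy)
  · refine Ideal.mem_comap.2 (Submodule.mem_colon.2 fun y hy => pow_mul_pow_mul_pow_le hi ?_)
    rw [← Ideal.map_pow, ← Ideal.map_pow, ← Ideal.map_mul]
    exact Ideal.mul_mem_mul (Ideal.mem_map_of_mem _ hx) hy
  · rw [mul_comm] at hx
    simpa using pow_mul_pow_le (j := 0) hI (Nat.zero_le i) (by omega) hx

end Transfer

section Homogeneous

variable {σ τ : Type*} {i s : ℕ}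

lemma notMem_pow_idealOfVars_of_isHomogeneous {R : Type*} [CommSemiring R]
    {f : MvPolynomial σ R} {n d : ℕ} (hf : f.IsHomogeneous n) (h0 : f ≠ 0) (hn : n < d) :
    f ∉ idealOfVars σ R ^ d := by
  obtain ⟨β, hβ⟩ := ne_zero_iff.1 h0
  refine fun h => hβ ((mem_pow_idealOfVars_iff' d f).1 h β ?_)
  by_contra hβd
  exact hβ (hf.coeff_eq_zero (by omega))

variable {k : Type*} [Field k]

lemma _root_.IsHomogIdeal.exists_isHomogeneous_le_pow {I : Ideal (MvPolynomial σ k)}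
    (hI : IsHomogIdeal I) (h0 : I ≠ ⊥) :
    ∃ f ∈ I, f ≠ 0 ∧ ∃ e, f.IsHomogeneous e ∧ I ≤ idealOfVars σ k ^ e := by
  classical
  have hcomp (g : MvPolynomial σ k) (hg : g ∈ I) (β : σ →₀ ℕ) (hβ : β ∈ g.support) :
      ∃ f ∈ I, f ≠ 0 ∧ f.IsHomogeneous β.degree := by
    refine ⟨_, hI g hg β.degree, fun h => mem_support_iff.1 hβ ?_,
      homogeneousComponent_isHomogeneous _ _⟩
    simpa [h] using (coeff_homogeneousComponent β.degree g β).symm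
  have hex : ∃ e, ∃ f ∈ I, f ≠ 0 ∧ f.IsHomogeneous e := by
    obtain ⟨g, hg, hg0⟩ := Submodule.exists_mem_ne_zero_of_ne_bot h0
    obtain ⟨β, hβ⟩ := ne_zero_iff.1 hg0
    exact ⟨_, hcomp g hg β (mem_support_iff.2 hβ)⟩
  obtain ⟨f, hf, hf0, hfe⟩ := Nat.find_spec hex
  exact ⟨f, hf, hf0, Nat.find hex, hfe, fun g hg => (mem_pow_idealOfVars_iff _ _).2
    fun β hβ => Nat.find_min' hex (hcomp g hg β hβ)⟩

theorem not_pow_mul_pow_mul_pow_le [Nonempty σ] [Nonempty τ] {I : Ideal (MvPolynomial σ k)}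
    {J : Ideal (MvPolynomial τ k)} (hI : I ≤ idealOfVars σ k ^ 2) (hJ : J ≤ idealOfVars τ k ^ 2)
    (hIhom : IsHomogIdeal I) (hI0 : I ≠ ⊥) (hi : i < s) :
    ¬ I.map (rename Sum.inl) ^ i * (idealOfVars σ k).map (rename Sum.inl) ^ (s - i - 1) *
        (idealOfVars τ k).map (rename Sum.inr) ^ (s - i) ≤ ideal I J ^ s := by
  intro hle
  obtain ⟨f, hfI, hf0, e, hf, hIe⟩ := hIhom.exists_isHomogeneous_le_pow hI0
  obtain ⟨x⟩ := ‹Nonempty σ›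
  obtain ⟨y⟩ := ‹Nonempty τ›
  have hmem : rename Sum.inl (f ^ i * X x ^ (s - i - 1)) * X (Sum.inr y) ^ (s - i) ∈
      I.map (rename Sum.inl) ^ i * (idealOfVars σ k).map (rename Sum.inl) ^ (s - i - 1) *
        (idealOfVars τ k).map (rename Sum.inr) ^ (s - i) := by
    rw [map_mul, map_pow, map_pow, rename_X]
    exact Ideal.mul_mem_mul
      (Ideal.mul_mem_mul (Ideal.pow_mem_pow (Ideal.mem_map_of_mem _ hfI) _)
        (Ideal.pow_mem_pow (X_mem_map_rename_idealOfVars _ x) _))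
      (Ideal.pow_mem_pow (X_mem_map_rename_idealOfVars _ y) _)
  have hpow : I ^ i * idealOfVars σ k ^ (s - i) ≤ idealOfVars σ k ^ (e * i + (s - i)) := by
    rw [pow_add, pow_mul]
    exact Ideal.mul_mono_left (Ideal.pow_right_mono hIe i)
  exact notMem_pow_idealOfVars_of_isHomogeneous ((hf.pow i).mul (isHomogeneous_X_pow x _))
    (mul_ne_zero (pow_ne_zero _ hf0) (pow_ne_zero _ (X_ne_zero x))) (by omega)
    (hpow (mem_pow_mul_of_rename_mul_X_pow_mem hI hJ hi.le y (hle hmem)))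

end Homogeneous

end FiberProduct

theorem fiberProduct_colon_lemma_general
    (k : Type*) [Field k] (a b : ℕ) (ha : 0 < a) (hb : 0 < b)
    (I : Ideal (MvPolynomial (Fin a) k)) (hIm : I ≤ mxI k (Fin a) ^ 2)
    (hIhom : IsHomogIdeal I)
    (J : Ideal (MvPolynomial (Fin b) k)) (hJn : J ≤ mxI k (Fin b) ^ 2)
    (I' J' m' n' : Ideal (MvPolynomial (Fin a ⊕ Fin b) k))
    (hI' : I' = Ideal.map (rename (Sum.inl : Fin a → Fin a ⊕ Fin b) :
      MvPolynomial (Fin a) k →ₐ[k] MvPolynomial (Fin a ⊕ Fin b) k) I)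
    (hJ' : J' = Ideal.map (rename (Sum.inr : Fin b → Fin a ⊕ Fin b) :
      MvPolynomial (Fin b) k →ₐ[k] MvPolynomial (Fin a ⊕ Fin b) k) J)
    (hm' : m' = Ideal.map (rename (Sum.inl : Fin a → Fin a ⊕ Fin b) :
      MvPolynomial (Fin a) k →ₐ[k] MvPolynomial (Fin a ⊕ Fin b) k) (mxI k (Fin a)))
    (hn' : n' = Ideal.map (rename (Sum.inr : Fin b → Fin a ⊕ Fin b) :
      MvPolynomial (Fin b) k →ₐ[k] MvPolynomial (Fin a ⊕ Fin b) k) (mxI k (Fin b)))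
    (F : Ideal (MvPolynomial (Fin a ⊕ Fin b) k)) (hF : F = I' + J' + m' * n')
    (s i : ℕ) (hs : 2 ≤ s) (his : i ≤ s - 1) :
    ((I' ^ i ⊓ m' ^ s) * n' ^ (s - i) ⊓ F ^ s ≤ (m' * n') ^ (s - i) * F ^ i ∧
      Ideal.comap (rename (Sum.inl : Fin a → Fin a ⊕ Fin b) :
          MvPolynomial (Fin a) k →ₐ[k] MvPolynomial (Fin a ⊕ Fin b) k)
          (Submodule.colon (F ^ s) ((n' ^ (s - i) : Ideal (MvPolynomial (Fin a ⊕ Fin b) k)) : Set (MvPolynomial (Fin a ⊕ Fin b) k))) ⊓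
        (I ^ i ⊓ mxI k (Fin a) ^ s) =
      mxI k (Fin a) ^ (s - i) * I ^ i) ∧
    (I ≠ ⊥ → ¬ (I' ^ i * m' ^ (s - i - 1) * n' ^ (s - i) ≤ F ^ s)) := by
  subst hI' hJ' hm' hn' hF
  have : Nonempty (Fin a) := ⟨⟨0, ha⟩⟩
  have : Nonempty (Fin b) := ⟨⟨0, hb⟩⟩
  have hi : i < s := by omega
  exact ⟨⟨FiberProduct.inf_mul_pow_inf_pow_le hIm hJn hi.le,
    FiberProduct.comap_colon_inf_eq hIm hJn hi.le⟩,
    fun hI0 => FiberProduct.not_pow_mul_pow_mul_pow_le hIm hJn hIhom hI0 hi⟩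

theorem fiberProduct_colon_lemma
    (k : Type*) [Field k] (a b : ℕ) (ha : 0 < a) (hb : 0 < b)
    (I : Ideal (MvPolynomial (Fin a) k)) (hIm : I ≤ mxI k (Fin a) ^ 2)
    (hIproper : I ≠ ⊤) (hIhom : IsHomogIdeal I)
    (J : Ideal (MvPolynomial (Fin b) k)) (hJn : J ≤ mxI k (Fin b) ^ 2)
    (hJproper : J ≠ ⊤) (hJhom : IsHomogIdeal J)
    (I' J' m' n' : Ideal (MvPolynomial (Fin a ⊕ Fin b) k))
    (hI' : I' = Ideal.map (rename (Sum.inl : Fin a → Fin a ⊕ Fin b) :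
      MvPolynomial (Fin a) k →ₐ[k] MvPolynomial (Fin a ⊕ Fin b) k) I)
    (hJ' : J' = Ideal.map (rename (Sum.inr : Fin b → Fin a ⊕ Fin b) :
      MvPolynomial (Fin b) k →ₐ[k] MvPolynomial (Fin a ⊕ Fin b) k) J)
    (hm' : m' = Ideal.map (rename (Sum.inl : Fin a → Fin a ⊕ Fin b) :
      MvPolynomial (Fin a) k →ₐ[k] MvPolynomial (Fin a ⊕ Fin b) k) (mxI k (Fin a)))
    (hn' : n' = Ideal.map (rename (Sum.inr : Fin b → Fin a ⊕ Fin b) :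
      MvPolynomial (Fin b) k →ₐ[k] MvPolynomial (Fin a ⊕ Fin b) k) (mxI k (Fin b)))
    (F : Ideal (MvPolynomial (Fin a ⊕ Fin b) k)) (hF : F = I' + J' + m' * n')
    (s i : ℕ) (hs : 2 ≤ s) (hi1 : 1 ≤ i) (his : i ≤ s - 1) :
    ((I' ^ i ⊓ m' ^ s) * n' ^ (s - i) ⊓ F ^ s ≤ (m' * n') ^ (s - i) * F ^ i ∧
      Ideal.comap (rename (Sum.inl : Fin a → Fin a ⊕ Fin b) :
          MvPolynomial (Fin a) k →ₐ[k] MvPolynomial (Fin a ⊕ Fin b) k)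
          (Submodule.colon (F ^ s) ((n' ^ (s - i) : Ideal (MvPolynomial (Fin a ⊕ Fin b) k)) : Set (MvPolynomial (Fin a ⊕ Fin b) k))) ⊓
        (I ^ i ⊓ mxI k (Fin a) ^ s) =
      mxI k (Fin a) ^ (s - i) * I ^ i) ∧
    (I ≠ ⊥ → ¬ (I' ^ i * m' ^ (s - i - 1) * n' ^ (s - i) ≤ F ^ s)) :=
  fiberProduct_colon_lemma_general k a b ha hb I hIm hIhom J hJn I' J' m' n' hI' hJ' hm' hn' F hF s
    i hs his

end
end

section
/- Let k be a field, let R and S be polynomial rings over k in at least one variable each, with graded maximal ideals m and n, let I ⊆ m² and J ⊆ n² be proper homogeneous ideals, let T = R ⊗_k S with graded maximal ideal p = mT + nT, and let F = I + J + mn ⊆ T. For s ≥ 1 set U_s = (I + n)^s ∩ (J + m)^s. Then p^{2s−1}·U_s ⊆ F^s ⊆ U_s; in particular the T-module U_s/F^s has finite length. -/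
open MvPolynomial

noncomputable section

/-!
Since `m (I + n) ⊆ m I + m n ⊆ F`, we get `m^s (I + n)^s = (m (I + n))^s ⊆ F^s`, and symmetrically
`n^s (J + m)^s ⊆ F^s`. Every product of `2s - 1` generators of `p = m + n` lies in `m^s` or in
`n^s`, so `p^(2s-1) U_s ⊆ F^s`. The inclusion `F^s ⊆ U_s` holds because `I ⊆ m` and `J ⊆ n`.
Finally `U_s / F^s` is finitely generated and killed by a power of the maximal ideal `p`, hence
a finitely generated module over the artinian ring `T / p^(2s-1)`.
-/

namespace Ideal

variable {R : Type*} [CommRing R]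

theorem sup_pow_two_mul_sub_one_le (A B : Ideal R) (s : ℕ) :
    (A ⊔ B) ^ (2 * s - 1) ≤ A ^ s ⊔ B ^ s := by
  rw [← add_eq_sup, ← add_eq_sup, add_pow, sum_eq_sup]
  refine Finset.sup_le fun i hi => ?_
  rw [Finset.mem_range] at hi
  by_cases hs : s ≤ i
  · exact mul_le_left.trans (mul_le_left.trans ((pow_le_pow_right hs).trans le_sup_left))
  · exact mul_le_left.trans (mul_le_right.trans ((pow_le_pow_right (by omega)).trans le_sup_right))

variable (I J m n : Ideal R)

theorem pow_mul_pow_add_le_pow_add_add_mul (s : ℕ) :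
    m ^ s * (I + n) ^ s ≤ (I + J + m * n) ^ s := by
  rw [← mul_pow, mul_add]
  simp only [add_eq_sup]
  exact pow_right_mono (sup_le_sup (mul_le_right.trans le_sup_left) le_rfl) s

theorem add_pow_mul_inf_le_pow_add_add_mul (s : ℕ) :
    (m + n) ^ (2 * s - 1) * ((I + n) ^ s ⊓ (J + m) ^ s) ≤ (I + J + m * n) ^ s :=
  calc (m + n) ^ (2 * s - 1) * ((I + n) ^ s ⊓ (J + m) ^ s)
      ≤ (m ^ s + n ^ s) * ((I + n) ^ s ⊓ (J + m) ^ s) :=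
        mul_mono_left (sup_pow_two_mul_sub_one_le m n s)
    _ ≤ m ^ s * (I + n) ^ s + n ^ s * (J + m) ^ s := by
        rw [add_mul]
        exact sup_le_sup (mul_mono_right inf_le_left) (mul_mono_right inf_le_right)
    _ ≤ (I + J + m * n) ^ s := by
        refine sup_le (pow_mul_pow_add_le_pow_add_add_mul I J m n s) ?_
        simpa only [add_comm I J, mul_comm m n] using pow_mul_pow_add_le_pow_add_add_mul J I n m s

theorem pow_add_add_mul_le_inf (hI : I ≤ m) (hJ : J ≤ n) (s : ℕ) :
    (I + J + m * n) ^ s ≤ (I + n) ^ s ⊓ (J + m) ^ s := by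
  simp only [add_eq_sup]
  refine le_inf (pow_right_mono ?_ s) (pow_right_mono ?_ s)
  · exact sup_le (sup_le le_sup_left (le_sup_of_le_right hJ)) (le_sup_of_le_right mul_le_right)
  · exact sup_le (sup_le (le_sup_of_le_right hI) le_sup_left) (le_sup_of_le_right mul_le_left)

theorem krullDimLE_zero_quotient_pow (P : Ideal R) [hP : P.IsMaximal] (n : ℕ) :
    Ring.KrullDimLE 0 (R ⧸ P ^ n) :=
  krullDimLE_zero_quotient_iff_forall_minimalPrimes_isMaximal.mpr fun _ hJ ↦
    hP.eq_of_le hJ.1.1.ne_top (hJ.1.1.le_of_pow_le hJ.1.2) ▸ hP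

end Ideal

theorem isFiniteLength_of_isTorsionBySet_pow {R M : Type*} [CommRing R] [IsNoetherianRing R]
    [AddCommGroup M] [Module R M] [Module.Finite R M] (P : Ideal R) [P.IsMaximal] (n : ℕ)
    (hM : Module.IsTorsionBySet R M ↑(P ^ n)) : IsFiniteLength R M := by
  let := hM.module
  have := Ideal.krullDimLE_zero_quotient_pow P n
  have : IsArtinianRing (R ⧸ P ^ n) := IsNoetherianRing.isArtinianRing_of_krullDimLE_zero
  have : Module.Finite (R ⧸ P ^ n) M := Module.Finite.of_restrictScalars_finite R _ M
  rw [isFiniteLength_iff_isNoetherian_isArtinian]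
  exact ⟨inferInstance, isArtinian_of_surjective_algebraMap (R := R ⧸ P ^ n)
    Ideal.Quotient.mk_surjective⟩

namespace MvPolynomial

theorem isMaximal_idealOfVars_s19 (σ k : Type*) [Field k] : (idealOfVars σ k).IsMaximal := by
  have : idealOfVars σ k = RingHom.ker (constantCoeff (σ := σ) (R := k)) := by
    ext p
    rw [RingHom.mem_ker, ← pow_one (idealOfVars σ k), mem_pow_idealOfVars_iff']
    simp [Finsupp.degree_eq_zero_iff, constantCoeff]
  exact this ▸ RingHom.ker_isMaximal_of_surjective _ fun r ↦ ⟨C r, constantCoeff_C _ r⟩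

theorem map_rename_inl_sup_map_rename_inr_idealOfVars (σ τ k : Type*) [CommRing k] :
    (idealOfVars σ k).map (rename (R := k) (Sum.inl : σ → σ ⊕ τ)) ⊔
      (idealOfVars τ k).map (rename (R := k) (Sum.inr : τ → σ ⊕ τ)) = idealOfVars (σ ⊕ τ) k := by
  simp only [idealOfVars, Ideal.map_span, ← Set.range_comp, ← Ideal.span_union]
  congr 1
  ext p
  simp [Sum.exists]

end MvPolynomial

theorem pow_fiberProduct_sandwich_finiteLength_general
    (k : Type*) [Field k] (a b : ℕ)
    (I : Ideal (MvPolynomial (Fin a) k)) (hIm : I ≤ mxI k (Fin a) ^ 2)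
    (J : Ideal (MvPolynomial (Fin b) k)) (hJn : J ≤ mxI k (Fin b) ^ 2)
    (I' J' m' n' : Ideal (MvPolynomial (Fin a ⊕ Fin b) k))
    (hI' : I' = Ideal.map (rename (Sum.inl : Fin a → Fin a ⊕ Fin b) :
      MvPolynomial (Fin a) k →ₐ[k] MvPolynomial (Fin a ⊕ Fin b) k) I)
    (hJ' : J' = Ideal.map (rename (Sum.inr : Fin b → Fin a ⊕ Fin b) :
      MvPolynomial (Fin b) k →ₐ[k] MvPolynomial (Fin a ⊕ Fin b) k) J)
    (hm' : m' = Ideal.map (rename (Sum.inl : Fin a → Fin a ⊕ Fin b) :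
      MvPolynomial (Fin a) k →ₐ[k] MvPolynomial (Fin a ⊕ Fin b) k) (mxI k (Fin a)))
    (hn' : n' = Ideal.map (rename (Sum.inr : Fin b → Fin a ⊕ Fin b) :
      MvPolynomial (Fin b) k →ₐ[k] MvPolynomial (Fin a ⊕ Fin b) k) (mxI k (Fin b)))
    (F : Ideal (MvPolynomial (Fin a ⊕ Fin b) k)) (hF : F = I' + J' + m' * n')
    (s : ℕ)
    (U : Ideal (MvPolynomial (Fin a ⊕ Fin b) k))
    (hU : U = (I' + n') ^ s ⊓ (J' + m') ^ s) :
    (m' + n') ^ (2 * s - 1) * U ≤ F ^ s ∧ F ^ s ≤ U ∧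
      IsFiniteLength (MvPolynomial (Fin a ⊕ Fin b) k)
        (↥(Submodule.map (Submodule.mkQ (F ^ s : Submodule (MvPolynomial (Fin a ⊕ Fin b) k)
            (MvPolynomial (Fin a ⊕ Fin b) k)))
          (U : Submodule (MvPolynomial (Fin a ⊕ Fin b) k) (MvPolynomial (Fin a ⊕ Fin b) k)))) := by
  have hmax : (m' + n').IsMaximal := by
    rw [hm', hn', mxI, mxI, Ideal.add_eq_sup, map_rename_inl_sup_map_rename_inr_idealOfVars]
    exact isMaximal_idealOfVars_s19 _ _
  have hI : I' ≤ m' := hI' ▸ hm' ▸ Ideal.map_mono (hIm.trans (Ideal.pow_le_self two_ne_zero))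
  have hJ : J' ≤ n' := hJ' ▸ hn' ▸ Ideal.map_mono (hJn.trans (Ideal.pow_le_self two_ne_zero))
  subst hF hU
  have hkill := Ideal.add_pow_mul_inf_le_pow_add_add_mul I' J' m' n' s
  refine ⟨hkill, Ideal.pow_add_add_mul_le_inf I' J' m' n' hI hJ s,
    isFiniteLength_of_isTorsionBySet_pow (m' + n') (2 * s - 1) ?_⟩
  rintro ⟨_, u, hu, rfl⟩ ⟨r, hr⟩
  ext
  exact (Submodule.Quotient.mk_eq_zero _).mpr (hkill (Ideal.mul_mem_mul hr hu))

theorem pow_fiberProduct_sandwich_finiteLength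
    (k : Type*) [Field k] (a b : ℕ) (ha : 0 < a) (hb : 0 < b)
    (I : Ideal (MvPolynomial (Fin a) k)) (hIm : I ≤ mxI k (Fin a) ^ 2)
    (hIproper : I ≠ ⊤) (hIhom : IsHomogIdeal I)
    (J : Ideal (MvPolynomial (Fin b) k)) (hJn : J ≤ mxI k (Fin b) ^ 2)
    (hJproper : J ≠ ⊤) (hJhom : IsHomogIdeal J)
    (I' J' m' n' : Ideal (MvPolynomial (Fin a ⊕ Fin b) k))
    (hI' : I' = Ideal.map (rename (Sum.inl : Fin a → Fin a ⊕ Fin b) :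
      MvPolynomial (Fin a) k →ₐ[k] MvPolynomial (Fin a ⊕ Fin b) k) I)
    (hJ' : J' = Ideal.map (rename (Sum.inr : Fin b → Fin a ⊕ Fin b) :
      MvPolynomial (Fin b) k →ₐ[k] MvPolynomial (Fin a ⊕ Fin b) k) J)
    (hm' : m' = Ideal.map (rename (Sum.inl : Fin a → Fin a ⊕ Fin b) :
      MvPolynomial (Fin a) k →ₐ[k] MvPolynomial (Fin a ⊕ Fin b) k) (mxI k (Fin a)))
    (hn' : n' = Ideal.map (rename (Sum.inr : Fin b → Fin a ⊕ Fin b) :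
      MvPolynomial (Fin b) k →ₐ[k] MvPolynomial (Fin a ⊕ Fin b) k) (mxI k (Fin b)))
    (F : Ideal (MvPolynomial (Fin a ⊕ Fin b) k)) (hF : F = I' + J' + m' * n')
    (s : ℕ) (hs : 1 ≤ s)
    (U : Ideal (MvPolynomial (Fin a ⊕ Fin b) k))
    (hU : U = (I' + n') ^ s ⊓ (J' + m') ^ s) :
    (m' + n') ^ (2 * s - 1) * U ≤ F ^ s ∧ F ^ s ≤ U ∧
      IsFiniteLength (MvPolynomial (Fin a ⊕ Fin b) k)
        (↥(Submodule.map (Submodule.mkQ (F ^ s : Submodule (MvPolynomial (Fin a ⊕ Fin b) k)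
            (MvPolynomial (Fin a ⊕ Fin b) k)))
          (U : Submodule (MvPolynomial (Fin a ⊕ Fin b) k) (MvPolynomial (Fin a ⊕ Fin b) k)))) :=
  pow_fiberProduct_sandwich_finiteLength_general k a b I hIm J hJn I' J' m' n' hI' hJ' hm' hn' F hF
    s U hU
end
end
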